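/- arXiv:1611.06504 — 4 statements merged into one kernel-verified Lean document; each statement's English description precedes it below -/
import Mathlib

section
/- With notation of the paper, for each level i and each 0 ≤ k ≤ n_i − 2, one has Ψ(f_{i,k+1}) = Ψ(f_{i,k}) + Ψ(−e_{F_{(i_{k+1}, j_{k+1})}}) = d_{i, φ_i(k+2)}; in particular Ψ sends every weight-area normal vector f_{i,k} of S_{w̲} to a weight-inequality normal vector d_{i,·} of C_{w̲}. -/
namespace GP

/-- Vertices of a pseudoline arrangement: `inl t` is the crossing at position `t`,
`inr k` is the right endpoint `L_k` of pseudoline `l_k` (lines are 0-indexed). -/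
abbrev V (n : ℕ) := ℕ ⊕ Fin (n+1)

variable {n : ℕ}

/-- The permutation sending a line (label) to its height after all crossings of `wd`. -/
def heightPerm (wd : List (Fin n)) : Equiv.Perm (Fin (n+1)) :=
  wd.foldl (fun e i => e.trans (Equiv.swap i.castSucc i.succ)) (Equiv.refl _)

/-- `IsCross wd t a b`: at position `t` the lines `a` (coming in at the lower height) and
`b` (coming in at the upper height) cross. -/
def IsCross (wd : List (Fin n)) (t : ℕ) (a b : Fin (n+1)) : Prop :=
  ∃ h : t < wd.length,
    (heightPerm (wd.take t)).symm (wd.get ⟨t, h⟩).castSucc = a ∧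
    (heightPerm (wd.take t)).symm (wd.get ⟨t, h⟩).succ = b

/-- The (unordered) crossing relation. -/
def Crossing (wd : List (Fin n)) (t : ℕ) (a b : Fin (n+1)) : Prop :=
  IsCross wd t a b ∨ IsCross wd t b a

def OnLine (wd : List (Fin n)) (l : Fin (n+1)) : V n → Prop
  | Sum.inl t => ∃ a b, IsCross wd t a b ∧ (l = a ∨ l = b)
  | Sum.inr k => l = k

/-- Horizontal position of a vertex; right endpoints lie to the right of all crossings. -/
def pos (wd : List (Fin n)) : V n → ℕ
  | Sum.inl t => t
  | Sum.inr _ => wd.length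

/-- `u` and `v` are consecutive vertices on the pseudoline `l`, with `u` to the left of `v`. -/
def EdgeOn (wd : List (Fin n)) (l : Fin (n+1)) (u v : V n) : Prop :=
  OnLine wd l u ∧ OnLine wd l v ∧ pos wd u < pos wd v ∧
    ∀ t : ℕ, pos wd u < t → t < pos wd v → ¬ OnLine wd l (Sum.inl t)

/-- In the orientation of shape `(l_i, l_{i+1})` the lines `l_1, …, l_i` (0-indexed: `0,…,i`)
are oriented right-to-left. -/
def Leftward (i : Fin n) (l : Fin (n+1)) : Prop := l.val ≤ i.val

/-- One step of an oriented path in the arrangement with orientation `(l_i, l_{i+1})`. -/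
def Step (wd : List (Fin n)) (i : Fin n) (u v : V n) : Prop :=
  ∃ l : Fin (n+1),
    (Leftward i l ∧ EdgeOn wd l v u) ∨ (¬ Leftward i l ∧ EdgeOn wd l u v)

/-- The forbidden (non-rigorous) configuration: the path travels straight along `l`
through the crossing of `l` and `l'` while either `l < l'` and both are oriented leftward,
or `l' < l` and both are oriented rightward. -/
def Forbidden (wd : List (Fin n)) (i : Fin n) (x v y : V n) : Prop :=
  ∃ (t : ℕ) (a b l l' : Fin (n+1)), v = Sum.inl t ∧ IsCross wd t a b ∧
    (({l, l'} : Set (Fin (n+1))) = {a, b}) ∧ OnLine wd l x ∧ OnLine wd l y ∧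
    ((l < l' ∧ Leftward i l') ∨ (l' < l ∧ ¬ Leftward i l'))

def Rigorous (wd : List (Fin n)) (i : Fin n) (p : List (V n)) : Prop :=
  ∀ x v y : V n, [x, v, y] <:+: p → ¬ Forbidden wd i x v y

/-- A Gleizer–Postnikov path of shape `(l_i, l_{i+1})` in the pseudoline arrangement of `wd`:
a rigorous oriented path from a source `L_p` with `p ≤ i` to a sink `L_q` with `q ≥ i+1`,
subject to `w(i+1) ≤ w(p), w(q) ≤ w(i)` (where `w` is the permutation of the arrangement). -/
structure IsGPPath (wd : List (Fin n)) (i : Fin n) (p : List (V n)) : Prop where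
  chain : p.Chain' (Step wd i)
  rigorous : Rigorous wd i p
  source : ∃ a : Fin (n+1), p.head? = some (Sum.inr a) ∧ a.val ≤ i.val ∧
    heightPerm wd i.succ ≤ heightPerm wd a ∧ heightPerm wd a ≤ heightPerm wd i.castSucc
  sink : ∃ b : Fin (n+1), p.getLast? = some (Sum.inr b) ∧ i.val < b.val ∧
    heightPerm wd i.succ ≤ heightPerm wd b ∧ heightPerm wd b ≤ heightPerm wd i.castSucc

/-- The path `p` changes from line `l` to line `l'` at the crossing `t`. -/
def changesAt (wd : List (Fin n)) (p : List (V n)) (t : ℕ) (l l' : Fin (n+1)) : Prop :=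
  ∃ x y : V n, [x, Sum.inl t, y] <:+: p ∧ OnLine wd l x ∧ OnLine wd l' y ∧ l ≠ l'

open Classical in
/-- The normal vector `c_p` of a GP-path, as a function on crossing positions:
`+1` at `t` if `p` changes from the smaller-labelled to the larger-labelled line there,
`-1` for the opposite change, `0` otherwise. -/
noncomputable def cvec (wd : List (Fin n)) (p : List (V n)) (t : ℕ) : ℤ :=
  if ∃ a b, IsCross wd t a b ∧ changesAt wd p t (min a b) (max a b) then 1
  else if ∃ a b, IsCross wd t a b ∧ changesAt wd p t (max a b) (min a b) then -1
  else 0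

/-- The (non-weighted) Gleizer–Postnikov cone of a reduced expression. -/
def GPCone (wd : List (Fin n)) : Set (Fin wd.length → ℝ) :=
  {x | ∀ (i : Fin n) (p : List (V n)), IsGPPath wd i p →
    0 ≤ ∑ t : Fin wd.length, (cvec wd p t.val : ℝ) * x t}

/-- `wd` is a reduced expression (of minimal length among all words with the same permutation). -/
def Reduced (wd : List (Fin n)) : Prop :=
  ∀ wd' : List (Fin n), heightPerm wd' = heightPerm wd → wd.length ≤ wd'.length

end GP

namespace GP

variable {n : ℕ}

/-- `z` lies on the lower-left or upper-right side of the crossing `u` of lines `a`, `b`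
(`a` the lower incoming line): i.e. strictly below the horizontal through the crossing. -/
def LowerSide (wd : List (Fin n)) (u : ℕ) (a b : Fin (n+1)) (z : V n) : Prop :=
  (OnLine wd a z ∧ pos wd z < u) ∨ (OnLine wd b z ∧ u < pos wd z)

/-- The path `p` passes through the crossing `u` transversally to the horizontal level of
the crossing (i.e. it crosses from below to above or conversely). -/
def Transversal (wd : List (Fin n)) (p : List (V n)) (u : ℕ) : Prop :=
  ∃ (x y : V n) (a b : Fin (n+1)), IsCross wd u a b ∧ [x, Sum.inl u, y] <:+: p ∧
    (LowerSide wd u a b x ↔ ¬ LowerSide wd u a b y)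

/-- The closure of the path along the right-hand boundary of the arrangement (from sink to
source) crosses the horizontal at level `h`. -/
def ClosureCross (wd : List (Fin n)) (p : List (V n)) (h : Fin n) : Prop :=
  ∃ sa sb : Fin (n+1), p.head? = some (Sum.inr sa) ∧ p.getLast? = some (Sum.inr sb) ∧
    (min (heightPerm wd sa) (heightPerm wd sb)).val ≤ h.val ∧
    h.val < (max (heightPerm wd sa) (heightPerm wd sb)).val

/-- The crossing at position `u` is at level `h`. -/
def LevelIs (wd : List (Fin n)) (u : ℕ) (h : Fin n) : Prop :=
  ∃ hu : u < wd.length, wd.get ⟨u, hu⟩ = h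

open Classical in
/-- Membership of a face in the area `A_p` enclosed on the left by the path `p`
(faces are indexed by `ℕ ⊕ Fin n`: `inl t` is the face bounded on the left by the crossing
`t`, `inr l` is the face unbounded to the left at level `l`). A face lies in `A_p` iff a
ray from the face to the right crosses the closed curve (`p` closed up along the right
boundary) an odd number of times. -/
def Inside (wd : List (Fin n)) (p : List (V n)) : (ℕ ⊕ Fin n) → Prop
  | Sum.inl t => ∃ ht : t < wd.length,
      Odd ((((Finset.range wd.length).filter (fun u =>
          t < u ∧ LevelIs wd u (wd.get ⟨t, ht⟩) ∧ Transversal wd p u)).card)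
        + (if ClosureCross wd p (wd.get ⟨t, ht⟩) then 1 else 0))
  | Sum.inr l =>
      Odd ((((Finset.range wd.length).filter (fun u =>
          LevelIs wd u l ∧ Transversal wd p u)).card)
        + (if ClosureCross wd p l then 1 else 0))

open Classical in
/-- The area vector `e_p = -∑_{F ⊆ A_p} e_F` of a GP-path, on face coordinates. -/
noncomputable def evecW (wd : List (Fin n)) (p : List (V n)) :
    Fin wd.length ⊕ Fin n → ℤ :=
  fun f => if Inside wd p (Sum.map Fin.val id f) then -1 else 0

/-- The path vector `c_p` extended by `0` on the weight coordinates. -/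
noncomputable def cvecW (wd : List (Fin n)) (p : List (V n)) :
    Fin wd.length ⊕ Fin n → ℤ :=
  Sum.elim (fun t : Fin wd.length => cvec wd p t.val) (fun _ => 0)

/-- The weight-inequality vector
`d_{i,k} = c_i - c_{i_k} - 2 ∑_{p > k, s_{i_p} = s_i} c_{i_p} + ∑_{j > k, s_{i_j} = s_{i±1}} c_{i_j}`. -/
def dvec (wd : List (Fin n)) (i : Fin n) (k : ℕ) : Fin wd.length ⊕ Fin n → ℤ
  | Sum.inr j => if j = i then 1 else 0
  | Sum.inl q =>
      if (q : ℕ) = k then -1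
      else if k < (q : ℕ) ∧ wd.get q = i then -2
      else if k < (q : ℕ) ∧ ((wd.get q).val = i.val + 1 ∨ i.val = (wd.get q).val + 1)
        then 1 else 0

/-- The value of `Ψ(-e_{F_t})` (for the face bounded on the left by the crossing `t`) at a
crossing coordinate: `c_t + c_{t'} - ∑ c_u`, where `t'` is the crossing bounding the face
on the right and `u` runs over the crossings bounding the face above and below. -/
def psiCol (wd : List (Fin n)) (t : Fin wd.length) : Fin wd.length ⊕ Fin n → ℤ
  | Sum.inr _ => 0
  | Sum.inl u =>
      (if u = t then 1 else 0)
      + (if (wd.get u = wd.get t ∧ t < u ∧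
            ∀ v : Fin wd.length, t < v → v < u → wd.get v ≠ wd.get t) then 1 else 0)
      + (if (((wd.get u).val = (wd.get t).val + 1 ∨ (wd.get t).val = (wd.get u).val + 1) ∧
            t < u ∧ ∀ v : Fin wd.length, t < v → v < u → wd.get v ≠ wd.get t)
          then -1 else 0)

open Classical in
/-- The matrix of the Chamber-Ansatz type linear map `Ψ` (on basis vectors:
`Ψ(-e_{F_{(i,j)}}) = c_{(i,j)} + c_{(i',j')} - ∑ c_{(i_r,j_r)}` and
`Ψ(-e_{F_i}) = d_{i,k_i}` with `k_i` the first occurrence of the letter `i`). -/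
noncomputable def psiMat (wd : List (Fin n)) :
    Matrix (Fin wd.length ⊕ Fin n) (Fin wd.length ⊕ Fin n) ℤ :=
  Matrix.of fun r s =>
    - (match s with
      | Sum.inl t => psiCol wd t r
      | Sum.inr l => dvec wd l (wd.idxOf l) r)

open Classical in
/-- The weight-area vector `f_{i,k} = -e_{F_i} - ∑_{r=1}^{k} e_{F_{(i_r,j_r)}}` (the face
unbounded to the left at level `i` together with the first `k` bounded faces at level `i`). -/
noncomputable def fvec (wd : List (Fin n)) (i : Fin n) (k : ℕ) :
    Fin wd.length ⊕ Fin n → ℤ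
  | Sum.inr j => if j = i then -1 else 0
  | Sum.inl u => if wd.get u = i ∧
      ((Finset.range u.val).filter (fun v => ∃ hv : v < wd.length, wd.get ⟨v, hv⟩ = i)).card < k
      then -1 else 0

/-- Pairing of an (integral) normal vector with a point. -/
noncomputable def dotI (wd : List (Fin n)) (v : Fin wd.length ⊕ Fin n → ℤ)
    (x : Fin wd.length ⊕ Fin n → ℝ) : ℝ :=
  ∑ s : Fin wd.length ⊕ Fin n, (v s : ℝ) * x s

/-- The weighted Gleizer–Postnikov cone `𝒞_{w̲} ⊆ ℝ^{ℓ(w)+n}` (equivalently, the weighted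
string cone): path inequalities, nonnegativity of the weight coordinates, and the weight
inequalities `d_{i,k}`. -/
noncomputable def CconeW (wd : List (Fin n)) : Set (Fin wd.length ⊕ Fin n → ℝ) :=
  {x | (∀ j : Fin n, 0 ≤ x (Sum.inr j)) ∧
       (∀ (i : Fin n) (p : List (V n)), IsGPPath wd i p → 0 ≤ dotI wd (cvecW wd p) x) ∧
       (∀ k : Fin wd.length, 0 ≤ dotI wd (dvec wd (wd.get k) k.val) x)}

/-- The cone `𝒮_{w̲} ⊆ ℝ^{ℓ(w)+n}`: area inequalities of GP-paths and weight-area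
inequalities `f_{i,k}` for `0 ≤ k ≤ n_i - 1`. -/
noncomputable def SconeW (wd : List (Fin n)) : Set (Fin wd.length ⊕ Fin n → ℝ) :=
  {x | (∀ (i : Fin n) (p : List (V n)), IsGPPath wd i p → 0 ≤ dotI wd (evecW wd p) x) ∧
       (∀ (i : Fin n) (k : ℕ), (k : ℤ) ≤ (wd.count i : ℤ) - 1 →
          0 ≤ dotI wd (fvec wd i k) x)}

/-- The projection `τ` summing the coordinates of all faces at a given level. -/
noncomputable def tau (wd : List (Fin n)) (x : Fin wd.length ⊕ Fin n → ℝ) (i : Fin n) : ℝ :=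
  x (Sum.inr i) + ∑ t : Fin wd.length, if wd.get t = i then x (Sum.inl t) else 0

end GP

open GP

/-- The list of positions of the crossings at level `i`, read from left to right
(so `lvlPos wd i` has length `n_i`, and its `k`-th entry is the paper's `φ_i(k+1)`). -/
def lvlPos {n : ℕ} (wd : List (Fin n)) (i : Fin n) : List (Fin wd.length) :=
  (List.finRange wd.length).filter (fun t => decide (wd.get t = i))

/-! Ψ sends `f_{i,0} = -e_{F_i}` to `d_{i,φ_i(1)}` by its very definition on the unbounded face.
Passing from `f_{i,k}` to `f_{i,k+1}` adds `-e_F` for the bounded face `F` between the consecutive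
level-`i` crossings `t = φ_i(k+1) < t' = φ_i(k+2)`, and `Ψ(-e_F) = c_t + c_{t'} - ∑ c_u`
(`u` the neighbouring-level crossings strictly between them) is exactly `d_{i,t'} - d_{i,t}`.
Induction on `k` then gives both claims. -/

namespace GP

variable {n : ℕ}

section lvlPos

variable {wd : List (Fin n)} {i : Fin n}

lemma mem_lvlPos {t : Fin wd.length} : t ∈ lvlPos wd i ↔ wd.get t = i := by
  simp [lvlPos]

lemma sortedLT_lvlPos : (lvlPos wd i).SortedLT :=
  ((List.sortedLT_finRange _).pairwise.filter _).sortedLT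

lemma get_lvlPos_get (a : Fin (lvlPos wd i).length) : wd.get ((lvlPos wd i).get a) = i :=
  mem_lvlPos.mp (List.get_mem _ a)

lemma exists_lvlPos_get_eq {t : Fin wd.length} (ht : wd.get t = i) :
    ∃ a, (lvlPos wd i).get a = t :=
  List.mem_iff_get.mp (mem_lvlPos.mpr ht)

lemma card_filter_lt_lvlPos_get (a : Fin (lvlPos wd i).length) :
    ((Finset.range ((lvlPos wd i).get a)).filter
      (fun v => ∃ hv : v < wd.length, wd.get ⟨v, hv⟩ = i)).card = a := by
  have hmono : StrictMono fun b : Fin a => (lvlPos wd i).get (Fin.castLE a.isLt.le b) :=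
    sortedLT_lvlPos.strictMono_get.comp (Fin.strictMono_castLE _)
  suffices h : (Finset.range ((lvlPos wd i).get a)).filter
      (fun v => ∃ hv : v < wd.length, wd.get ⟨v, hv⟩ = i) =
      Finset.univ.image (fun b : Fin a => ((lvlPos wd i).get (Fin.castLE a.isLt.le b) : ℕ)) by
    rw [h, Finset.card_image_of_injective _ fun b c hbc => hmono.injective (Fin.val_injective hbc),
      Finset.card_univ, Fintype.card_fin]
  ext v
  simp only [Finset.mem_filter, Finset.mem_range, Finset.mem_image, Finset.mem_univ, true_and]
  constructor
  · rintro ⟨hva, hv, hvi⟩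
    obtain ⟨b, hb⟩ := exists_lvlPos_get_eq hvi
    have hba : b < a := sortedLT_lvlPos.strictMono_get.lt_iff_lt.mp (by rw [hb]; exact hva)
    exact ⟨⟨b, hba⟩, congrArg Fin.val hb⟩
  · rintro ⟨b, rfl⟩
    exact ⟨sortedLT_lvlPos.strictMono_get (show Fin.castLE a.isLt.le b < a from b.isLt),
      Fin.isLt _, get_lvlPos_get _⟩

lemma idxOf_eq_lvlPos_get_zero (h : 0 < (lvlPos wd i).length) :
    wd.idxOf i = (lvlPos wd i).get ⟨0, h⟩ := by
  rw [List.idxOf, List.findIdx_eq (Fin.isLt _)]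
  refine ⟨beq_iff_eq.mpr (get_lvlPos_get _), fun j hj => beq_eq_false_iff_ne.mpr fun hji => ?_⟩
  obtain ⟨b, hb⟩ := exists_lvlPos_get_eq (t := ⟨j, hj.trans (Fin.isLt _)⟩) hji
  have := sortedLT_lvlPos.strictMono_get.monotone (show (⟨0, h⟩ : Fin _) ≤ b from Nat.zero_le _)
  rw [hb, Fin.le_def] at this
  exact absurd hj (not_lt.mpr this)

lemma get_ne_of_lvlPos_get_lt_of_lt_succ {k : ℕ} (hk : k + 1 < (lvlPos wd i).length)
    {v : Fin wd.length} (hkv : (lvlPos wd i).get ⟨k, k.lt_succ_self.trans hk⟩ < v)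
    (hvk : v < (lvlPos wd i).get ⟨k + 1, hk⟩) : wd.get v ≠ i := fun hvi => by
  obtain ⟨b, rfl⟩ := exists_lvlPos_get_eq hvi
  have hkb : k < b := sortedLT_lvlPos.strictMono_get.lt_iff_lt.mp hkv
  have hbk : (b : ℕ) < k + 1 := sortedLT_lvlPos.strictMono_get.lt_iff_lt.mp hvk
  omega

end lvlPos

lemma fvec_zero (wd : List (Fin n)) (i : Fin n) :
    fvec wd i 0 = -Pi.single (Sum.inr i) 1 := by
  funext s
  rcases s with u | j
  · simp [fvec]
  · by_cases h : j = i <;> simp [fvec, h]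

lemma fvec_succ {wd : List (Fin n)} {i : Fin n} {k : ℕ} (hk : k < (lvlPos wd i).length) :
    fvec wd i (k + 1) = fvec wd i k - Pi.single (Sum.inl ((lvlPos wd i).get ⟨k, hk⟩)) 1 := by
  funext s
  rcases s with u | j
  · by_cases hu : wd.get u = i
    · obtain ⟨b, rfl⟩ := exists_lvlPos_get_eq hu
      have hinj : (lvlPos wd i).get b = (lvlPos wd i).get ⟨k, hk⟩ ↔ (b : ℕ) = k :=
        sortedLT_lvlPos.strictMono_get.injective.eq_iff.trans Fin.ext_iff
      simp only [fvec, Pi.sub_apply, Pi.single_apply, Sum.inl.injEq, hinj, hu, true_and,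
        card_filter_lt_lvlPos_get]
      split_ifs <;> omega
    · have hne : u ≠ (lvlPos wd i).get ⟨k, hk⟩ := fun h => hu (h ▸ get_lvlPos_get _)
      simp only [fvec, hu, false_and, ite_false, Pi.sub_apply, Pi.single_apply, Sum.inl.injEq,
        hne, sub_zero]
  · simp [fvec]

lemma psiMat_mulVec_neg_single_inl (wd : List (Fin n)) (t : Fin wd.length) :
    (psiMat wd).mulVec (-Pi.single (Sum.inl t) 1) = psiCol wd t := by
  funext r
  simp [Matrix.mulVec_neg, psiMat]

lemma psiMat_mulVec_neg_single_inr (wd : List (Fin n)) (i : Fin n) :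
    (psiMat wd).mulVec (-Pi.single (Sum.inr i) 1) = dvec wd i (wd.idxOf i) := by
  funext r
  simp [Matrix.mulVec_neg, psiMat]

lemma dvec_eq_dvec_add_psiCol {wd : List (Fin n)} {i : Fin n} {t t' : Fin wd.length}
    (ht : wd.get t = i) (ht' : wd.get t' = i) (htt' : t < t')
    (hgap : ∀ v, t < v → v < t' → wd.get v ≠ i) :
    dvec wd i t' = dvec wd i t + psiCol wd t := by
  have hnext (q : Fin wd.length) : (t < q ∧ ∀ v, t < v → v < q → wd.get v ≠ i) ↔ t < q ∧ q ≤ t' :=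
    ⟨fun ⟨htq, h⟩ => ⟨htq, not_lt.mp fun hq => h t' htt' hq ht'⟩,
      fun ⟨htq, hq⟩ => ⟨htq, fun v hv hvq => hgap v hv (lt_of_lt_of_le hvq hq)⟩⟩
  funext r
  rcases r with q | j
  · have hmid : t < q → q < t' → wd.get q ≠ i := hgap q
    have hlast : q = t' → wd.get q = i := fun h => h ▸ ht'
    simp only [dvec, psiCol, Pi.add_apply, ht, hnext]
    simp only [Fin.ext_iff, Fin.le_def, Fin.lt_def] at hmid hlast htt' ⊢
    split_ifs <;> omega
  · simp [dvec, psiCol]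

theorem psiMat_mulVec_fvec (wd : List (Fin n)) (i : Fin n) (k : ℕ)
    (hk : k < (lvlPos wd i).length) :
    (psiMat wd).mulVec (fvec wd i k) = dvec wd i ((lvlPos wd i).get ⟨k, hk⟩) := by
  induction k with
  | zero => rw [fvec_zero, psiMat_mulVec_neg_single_inr, idxOf_eq_lvlPos_get_zero]
  | succ k ih =>
    have hk' : k < (lvlPos wd i).length := k.lt_succ_self.trans hk
    rw [fvec_succ hk', sub_eq_add_neg, Matrix.mulVec_add, ih hk', psiMat_mulVec_neg_single_inl,
      dvec_eq_dvec_add_psiCol (get_lvlPos_get _) (get_lvlPos_get _)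
        (sortedLT_lvlPos.strictMono_get k.lt_succ_self)
        fun v => get_ne_of_lvlPos_get_lt_of_lt_succ hk]

end GP

theorem psi_fvec_eq_dvec_general {n : ℕ} (wd : List (Fin n)) (i : Fin n) :
    (∀ k : ℕ, ∀ hk : k + 1 < (lvlPos wd i).length,
      (psiMat wd).mulVec (fvec wd i (k+1)) =
        (psiMat wd).mulVec (fvec wd i k) +
          (psiMat wd).mulVec
            (-(Pi.single (Sum.inl ((lvlPos wd i).get ⟨k, Nat.lt_of_succ_lt hk⟩)) 1)) ∧
      (psiMat wd).mulVec (fvec wd i (k+1)) =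
        dvec wd i ((lvlPos wd i).get ⟨k+1, hk⟩).val) ∧
    (∀ k : ℕ, ∀ hk : k < (lvlPos wd i).length,
      (psiMat wd).mulVec (fvec wd i k) = dvec wd i ((lvlPos wd i).get ⟨k, hk⟩).val) := by
  refine ⟨fun k hk => ⟨?_, psiMat_mulVec_fvec wd i (k + 1) hk⟩, psiMat_mulVec_fvec wd i⟩
  rw [fvec_succ, sub_eq_add_neg, Matrix.mulVec_add]

/-- **`Ψ` maps the weight-area vectors to the weight-inequality vectors.**
For each level `i` and each `0 ≤ k ≤ n_i - 2`:
`Ψ(f_{i,k+1}) = Ψ(f_{i,k}) + Ψ(-e_{F_{(i_{k+1},j_{k+1})}}) = d_{i, φ_i(k+2)}`;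
and in particular `Ψ` sends every weight-area normal vector `f_{i,k}`, `0 ≤ k ≤ n_i - 1`,
to the weight-inequality normal vector `d_{i, φ_i(k+1)}` of `𝒞_{w̲}`. -/
theorem psi_fvec_eq_dvec {n : ℕ} (wd : List (Fin n)) (hred : Reduced wd) (i : Fin n) :
    (∀ k : ℕ, ∀ hk : k + 1 < (lvlPos wd i).length,
      (psiMat wd).mulVec (fvec wd i (k+1)) =
        (psiMat wd).mulVec (fvec wd i k) +
          (psiMat wd).mulVec
            (-(Pi.single (Sum.inl ((lvlPos wd i).get ⟨k, Nat.lt_of_succ_lt hk⟩)) 1)) ∧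
      (psiMat wd).mulVec (fvec wd i (k+1)) =
        dvec wd i ((lvlPos wd i).get ⟨k+1, hk⟩).val) ∧
    (∀ k : ℕ, ∀ hk : k < (lvlPos wd i).length,
      (psiMat wd).mulVec (fvec wd i k) = dvec wd i ((lvlPos wd i).get ⟨k, hk⟩).val) :=
  psi_fvec_eq_dvec_general wd i
end

section
/- The restriction to the w̲-part of any GP-path for an extended reduced expression w̲_0 is either empty or a disjoint union of GP-paths for w̲. -/
open GP

/-- The restriction of a path in the arrangement of an extended word to the arrangement of
`wd`: only the crossings of the `wd`-part are kept. -/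
def resPath {n : ℕ} (wd : List (Fin n)) (p : List (V n)) : List (V n) :=
  p.filter (fun v => match v with
    | Sum.inl t => decide (t < wd.length)
    | Sum.inr _ => false)

/-- The interior of a path: the path with its two (endpoint) vertices removed. -/
def pathInterior {n : ℕ} (p : List (V n)) : List (V n) := (p.drop 1).dropLast


section Aux
namespace GP

variable {n : ℕ}

theorem heightPerm_nil : heightPerm ([] : List (Fin n)) = Equiv.refl _ := rfl

theorem foldl_heightPerm (w : List (Fin n)) (e : Equiv.Perm (Fin (n+1))) :
    w.foldl (fun e i => e.trans (Equiv.swap i.castSucc i.succ)) e = e.trans (heightPerm w) := by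
  induction w generalizing e with
  | nil => simp [heightPerm]
  | cons a w ih =>
    have h2 : heightPerm (a :: w) = (Equiv.swap a.castSucc a.succ).trans (heightPerm w) := by
      simp only [heightPerm, List.foldl_cons]
      rw [ih]
      ext x; rfl
    simp only [List.foldl_cons]
    rw [ih, h2]
    ext x; rfl

theorem heightPerm_concat (w : List (Fin n)) (j : Fin n) :
    heightPerm (w ++ [j]) = (heightPerm w).trans (Equiv.swap j.castSucc j.succ) := by
  unfold heightPerm
  rw [List.foldl_append]
  simp [foldl_heightPerm]

theorem heightPerm_take_succ (w : List (Fin n)) (t : ℕ) (h : t < w.length) :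
    heightPerm (w.take (t+1)) =
      (heightPerm (w.take t)).trans (Equiv.swap (w.get ⟨t, h⟩).castSucc (w.get ⟨t, h⟩).succ) := by
  rw [← heightPerm_concat]
  congr 1
  rw [List.take_succ]
  simp [List.getElem?_eq_getElem h]

/-- Order behaviour of an adjacent swap. -/
theorem swap_adj_lt (j : Fin n) (u v : Fin (n+1)) :
    Equiv.swap j.castSucc j.succ u < Equiv.swap j.castSucc j.succ v ↔
      (if (u = j.castSucc ∧ v = j.succ) ∨ (u = j.succ ∧ v = j.castSucc)
        then v < u else u < v) := by
  simp only [Equiv.swap_apply_def]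
  have hj : (j.castSucc : Fin (n+1)).val = j.val := rfl
  have hj' : (j.succ : Fin (n+1)).val = j.val + 1 := rfl
  have hjn : j.val < n := j.isLt
  have hu : u.val ≤ n := Nat.lt_succ_iff.1 u.isLt
  have hv : v.val ≤ n := Nat.lt_succ_iff.1 v.isLt
  split_ifs <;>
    simp only [Fin.lt_def, Fin.ext_iff, hj, hj'] at * <;> omega

/-- Number of inversions of a permutation. -/
def inv (e : Equiv.Perm (Fin (n+1))) : ℕ :=
  (Finset.univ.filter (fun p : Fin (n+1) × Fin (n+1) => p.1 < p.2 ∧ e p.2 < e p.1)).card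

theorem inv_refl : inv (Equiv.refl (Fin (n+1))) = 0 := by
  simp only [inv, Finset.card_eq_zero, Finset.filter_eq_empty_iff]
  rintro ⟨x, y⟩ -
  simp only [Equiv.refl_apply]
  rintro ⟨h1, h2⟩
  exact absurd h1 (not_lt.2 h2.le)

theorem inv_trans_swap_of_lt (e : Equiv.Perm (Fin (n+1))) (j : Fin n)
    (hab : e.symm j.castSucc < e.symm j.succ) :
    inv (e.trans (Equiv.swap j.castSucc j.succ)) = inv e + 1 := by
  classical
  set a := e.symm j.castSucc with ha
  set b := e.symm j.succ with hb
  have hea : e a = j.castSucc := e.apply_symm_apply _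
  have heb : e b = j.succ := e.apply_symm_apply _
  have key : ∀ p : Fin (n+1) × Fin (n+1),
      (p.1 < p.2 ∧ (e.trans (Equiv.swap j.castSucc j.succ)) p.2
          < (e.trans (Equiv.swap j.castSucc j.succ)) p.1)
        ↔ ((p.1 < p.2 ∧ e p.2 < e p.1) ∨ p = (a, b)) := by
    rintro ⟨x, y⟩
    simp only [Equiv.trans_apply]
    rw [swap_adj_lt]
    have hjlt : (j.castSucc : Fin (n+1)) < j.succ := by simp [Fin.lt_def]
    constructor
    · rintro ⟨hxy, h⟩
      split_ifs at h with hc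
      · rcases hc with ⟨h1, h2⟩ | ⟨h1, h2⟩
        · -- e y = j.castSucc, e x = j.succ : then y = a, x = b, contradicting x < y < via hab
          have hy : y = a := by apply e.injective; rw [hea, h1]
          have hx : x = b := by apply e.injective; rw [heb, h2]
          subst hx; subst hy
          exact absurd hxy (not_lt.2 hab.le)
        · -- e y = j.succ, e x = j.castSucc : x = a, y = b
          have hy : y = b := by apply e.injective; rw [heb, h1]
          have hx : x = a := by apply e.injective; rw [hea, h2]
          right; rw [hx, hy]
      · exact Or.inl ⟨hxy, h⟩
    · rintro (⟨hxy, h⟩ | hp)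
      · refine ⟨hxy, ?_⟩
        split_ifs with hc
        · exfalso
          rcases hc with ⟨h1, h2⟩ | ⟨h1, h2⟩
          · have hy : y = a := by apply e.injective; rw [hea, h1]
            have hx : x = b := by apply e.injective; rw [heb, h2]
            subst hx; subst hy
            exact absurd hxy (not_lt.2 hab.le)
          · rw [h1, h2] at h
            exact absurd h (not_lt.2 hjlt.le)
        · exact h
      · rcases Prod.ext_iff.1 hp with ⟨hx, hy⟩
        simp only at hx hy
        subst hx; subst hy
        refine ⟨hab, ?_⟩
        rw [if_pos (Or.inr ⟨heb, hea⟩), hea, heb]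
        exact hjlt
  unfold inv
  have : (Finset.univ.filter (fun p : Fin (n+1) × Fin (n+1) =>
      p.1 < p.2 ∧ (e.trans (Equiv.swap j.castSucc j.succ)) p.2
        < (e.trans (Equiv.swap j.castSucc j.succ)) p.1))
      = insert (a, b) (Finset.univ.filter (fun p : Fin (n+1) × Fin (n+1) =>
          p.1 < p.2 ∧ e p.2 < e p.1)) := by
    ext p
    simp only [Finset.mem_filter, Finset.mem_insert, Finset.mem_univ, true_and]
    rw [key p]
    tauto
  rw [this, Finset.card_insert_of_notMem]
  simp only [Finset.mem_filter, Finset.mem_univ, true_and, not_and]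
  intro _
  rw [hea, heb]
  intro h
  exact absurd h (not_lt.2 (by simp [Fin.le_def]))

theorem inv_trans_swap_of_gt (e : Equiv.Perm (Fin (n+1))) (j : Fin n)
    (hab : e.symm j.succ < e.symm j.castSucc) :
    inv e = inv (e.trans (Equiv.swap j.castSucc j.succ)) + 1 := by
  classical
  set e' := e.trans (Equiv.swap j.castSucc j.succ) with he'
  have hee : e'.trans (Equiv.swap j.castSucc j.succ) = e := by
    ext x
    simp [he', Equiv.swap_apply_self]
  have h1 : e'.symm j.castSucc < e'.symm j.succ := by
    have hc : e'.symm j.castSucc = e.symm j.succ := by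
      simp [he', Equiv.symm_trans_apply, Equiv.symm_swap, Equiv.swap_apply_left]
    have hs : e'.symm j.succ = e.symm j.castSucc := by
      simp [he', Equiv.symm_trans_apply, Equiv.symm_swap, Equiv.swap_apply_right]
    rw [hc, hs]; exact hab
  have := inv_trans_swap_of_lt e' j h1
  rw [hee] at this
  exact this

theorem inv_trans_swap_le (e : Equiv.Perm (Fin (n+1))) (j : Fin n) :
    inv (e.trans (Equiv.swap j.castSucc j.succ)) ≤ inv e + 1 := by
  rcases lt_trichotomy (e.symm j.castSucc) (e.symm j.succ) with h | h | h
  · exact (inv_trans_swap_of_lt e j h).le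
  · exact absurd (e.symm.injective h) (by simp [Fin.ext_iff])
  · have := inv_trans_swap_of_gt e j h
    omega

theorem inv_heightPerm_le (w : List (Fin n)) : inv (heightPerm w) ≤ w.length := by
  induction w using List.reverseRecOn with
  | nil => simp [heightPerm_nil, inv_refl]
  | append_singleton w j ih =>
    rw [heightPerm_concat]
    calc inv ((heightPerm w).trans (Equiv.swap j.castSucc j.succ))
        ≤ inv (heightPerm w) + 1 := inv_trans_swap_le _ _
      _ ≤ w.length + 1 := by omega
      _ = (w ++ [j]).length := by simp

theorem eq_refl_of_inv_eq_zero (e : Equiv.Perm (Fin (n+1))) (h : inv e = 0) :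
    e = Equiv.refl _ := by
  classical
  have hmono : StrictMono e := by
    intro x y hxy
    rcases lt_trichotomy (e x) (e y) with h' | h' | h'
    · exact h'
    · exact absurd (e.injective h') (ne_of_lt hxy)
    · exfalso
      have : (x, y) ∈ (Finset.univ.filter
          (fun p : Fin (n+1) × Fin (n+1) => p.1 < p.2 ∧ e p.2 < e p.1)) := by
        simp [hxy, h']
      rw [Finset.card_eq_zero.1 h] at this
      exact absurd this (Finset.notMem_empty _)
  haveI : WellFoundedLT (Fin (n+1)) := inferInstance
  have hmono' : StrictMono e.symm := by
    intro a b hab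
    rcases lt_trichotomy (e.symm a) (e.symm b) with h' | h' | h'
    · exact h'
    · exact absurd (e.symm.injective h') (ne_of_lt hab)
    · have := hmono h'
      simp only [Equiv.apply_symm_apply] at this
      exact absurd hab (not_lt.2 this.le)
  ext x
  have h1 : x ≤ e x := hmono.le_apply
  have h2 : e x ≤ x := by
    have := hmono.monotone (hmono'.le_apply (x := x))
    simpa using this
  exact le_antisymm h2 h1

theorem exists_word_of_inv : ∀ (k : ℕ) (e : Equiv.Perm (Fin (n+1))), inv e = k →
    ∃ w : List (Fin n), heightPerm w = e ∧ w.length = k := by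
  intro k
  induction k using Nat.strong_induction_on with
  | _ k ih =>
    intro e hk
    by_cases hd : ∃ j : Fin n, e.symm j.succ < e.symm j.castSucc
    · obtain ⟨j, hj⟩ := hd
      set e' := e.trans (Equiv.swap j.castSucc j.succ) with he'
      have hstep : inv e = inv e' + 1 := inv_trans_swap_of_gt e j hj
      have hlt : inv e' < k := by omega
      obtain ⟨w, hw, hwl⟩ := ih (inv e') hlt e' rfl
      refine ⟨w ++ [j], ?_, ?_⟩
      · rw [heightPerm_concat, hw, he']
        ext x
        simp [Equiv.swap_apply_self]
      · simp [hwl]; omega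
    · push_neg at hd
      have hmono : StrictMono e.symm := by
        rw [Fin.strictMono_iff_lt_succ]
        intro j
        rcases lt_trichotomy (e.symm j.castSucc) (e.symm j.succ) with h' | h' | h'
        · exact h'
        · exact absurd (e.symm.injective h') (by simp [Fin.ext_iff])
        · exact absurd h' (not_lt.2 (hd j))
      have hz : inv e = 0 := by
        by_contra hz
        obtain ⟨⟨x, y⟩, hmem⟩ := Finset.card_pos.1 (Nat.pos_of_ne_zero
          (fun h0 => hz (by unfold inv; exact h0)))
        simp only [Finset.mem_filter, Finset.mem_univ, true_and] at hmem
        obtain ⟨hxy, hexy⟩ := hmem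
        have := hmono hexy
        simp only [Equiv.symm_apply_apply] at this
        exact absurd hxy (not_lt.2 this.le)
      have he : e = Equiv.refl _ := eq_refl_of_inv_eq_zero e hz
      have hk0 : k = 0 := by omega
      exact ⟨[], by simp [heightPerm_nil, he], by simp [hk0]⟩

theorem inv_take_le (w : List (Fin n)) (c k : ℕ) :
    inv (heightPerm (w.take (c + k))) ≤ inv (heightPerm (w.take c)) + k := by
  induction k with
  | zero => simp
  | succ k ih =>
    by_cases h : c + k < w.length
    · rw [show c + (k+1) = (c+k) + 1 by omega, heightPerm_take_succ w _ h]
      calc inv _ ≤ inv (heightPerm (w.take (c+k))) + 1 := inv_trans_swap_le _ _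
        _ ≤ inv (heightPerm (w.take c)) + k + 1 := by omega
        _ = _ := by omega
    · have h1 : w.take (c + (k+1)) = w.take (c+k) := by
        rw [List.take_of_length_le (by omega), List.take_of_length_le (by omega)]
      rw [h1]
      omega

/-- In a reduced word, every crossing goes from lower label to higher label. -/
theorem cross_lt_of_reduced {w : List (Fin n)} (hred : Reduced w)
    {t : ℕ} {a b : Fin (n+1)} (hc : IsCross w t a b) : a < b := by
  obtain ⟨ht, ha, hb⟩ := hc
  set j := w.get ⟨t, ht⟩ with hj
  have hne : a ≠ b := by
    rw [← ha, ← hb]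
    intro h
    have := (heightPerm (w.take t)).symm.injective h
    exact absurd this (by simp [Fin.ext_iff])
  rcases lt_or_gt_of_ne hne with h | h
  · exact h
  · exfalso
    have hstep : inv (heightPerm (w.take t))
        = inv (heightPerm (w.take (t+1))) + 1 := by
      rw [heightPerm_take_succ w t ht]
      exact inv_trans_swap_of_gt _ j (by rw [ha, hb]; exact h)
    have h1 : inv (heightPerm (w.take t)) ≤ t := by
      have := inv_take_le w 0 t
      simpa [heightPerm_nil, inv_refl] using this
    have h2 : inv (heightPerm w) ≤ inv (heightPerm (w.take (t+1))) + (w.length - (t+1)) := by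
      have := inv_take_le w (t+1) (w.length - (t+1))
      rwa [show t + 1 + (w.length - (t+1)) = w.length by omega,
        List.take_length] at this
    have h3 : inv (heightPerm w) ≤ w.length - 2 := by omega
    obtain ⟨w', hw', hwl'⟩ := exists_word_of_inv (inv (heightPerm w)) (heightPerm w) rfl
    have := hred w' hw'
    omega


/-- Height of line `l` at (the right of) column `c`. -/
def hgt (w : List (Fin n)) (c : ℕ) (l : Fin (n+1)) : Fin (n+1) := heightPerm (w.take c) l

theorem isCross_lt_length {w : List (Fin n)} {t : ℕ} {a b : Fin (n+1)}
    (h : IsCross w t a b) : t < w.length := h.1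

theorem isCross_ne {w : List (Fin n)} {t : ℕ} {a b : Fin (n+1)}
    (h : IsCross w t a b) : a ≠ b := by
  obtain ⟨ht, ha, hb⟩ := h
  rw [← ha, ← hb]
  intro hq
  have := (heightPerm (w.take t)).symm.injective hq
  exact absurd this (by simp [Fin.ext_iff])

theorem isCross_unique {w : List (Fin n)} {t : ℕ} {a b a' b' : Fin (n+1)}
    (h : IsCross w t a b) (h' : IsCross w t a' b') : a = a' ∧ b = b' := by
  obtain ⟨ht, ha, hb⟩ := h
  obtain ⟨ht', ha', hb'⟩ := h'
  constructor
  · rw [← ha, ← ha']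
  · rw [← hb, ← hb']

theorem isCross_hgt {w : List (Fin n)} {t : ℕ} {a b : Fin (n+1)}
    (h : IsCross w t a b) :
    ∃ ht : t < w.length,
      hgt w t a = (w.get ⟨t, ht⟩).castSucc ∧ hgt w t b = (w.get ⟨t, ht⟩).succ ∧
      hgt w (t+1) a = (w.get ⟨t, ht⟩).succ ∧ hgt w (t+1) b = (w.get ⟨t, ht⟩).castSucc := by
  obtain ⟨ht, ha, hb⟩ := h
  refine ⟨ht, ?_, ?_, ?_, ?_⟩
  · rw [hgt, ← ha, Equiv.apply_symm_apply]
  · rw [hgt, ← hb, Equiv.apply_symm_apply]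
  · rw [hgt, heightPerm_take_succ w t ht, Equiv.trans_apply, ← ha, Equiv.apply_symm_apply,
      Equiv.swap_apply_left]
  · rw [hgt, heightPerm_take_succ w t ht, Equiv.trans_apply, ← hb, Equiv.apply_symm_apply,
      Equiv.swap_apply_right]

theorem hgt_inj {w : List (Fin n)} {c : ℕ} {l m : Fin (n+1)} (h : hgt w c l = hgt w c m) :
    l = m := (heightPerm (w.take c)).injective h

theorem hgt_stable {w : List (Fin n)} {c : ℕ} (hc : w.length ≤ c) (l : Fin (n+1)) :
    hgt w (c+1) l = hgt w c l := by
  unfold hgt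
  rw [List.take_of_length_le (by omega), List.take_of_length_le hc]

theorem hgt_succ_lt_iff {w : List (Fin n)} {c : ℕ} (hc : c < w.length) {l m : Fin (n+1)}
    (hno : ¬ Crossing w c l m) :
    (hgt w (c+1) l < hgt w (c+1) m ↔ hgt w c l < hgt w c m) := by
  set j := w.get ⟨c, hc⟩ with hj
  have h1 : ∀ x, hgt w (c+1) x = Equiv.swap j.castSucc j.succ (hgt w c x) := by
    intro x
    rw [hgt, heightPerm_take_succ w c hc, Equiv.trans_apply]
    rfl
  rw [h1, h1, swap_adj_lt]
  rw [if_neg]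
  intro hcond
  apply hno
  have hcr : ∀ x y : Fin (n+1), hgt w c x = j.castSucc → hgt w c y = j.succ →
      IsCross w c x y := by
    intro x y hx hy
    exact ⟨hc, by rw [Equiv.symm_apply_eq, ← hx]; rfl, by rw [Equiv.symm_apply_eq, ← hy]; rfl⟩
  rcases hcond with ⟨hx, hy⟩ | ⟨hx, hy⟩
  · exact Or.inl (hcr _ _ hx hy)
  · exact Or.inr (hcr _ _ hy hx)

theorem crossing_mem {w : List (Fin n)} {c : ℕ} {l m a b : Fin (n+1)}
    (h : Crossing w c l m) (hab : IsCross w c a b) : (l = a ∧ m = b) ∨ (l = b ∧ m = a) := by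
  rcases h with h | h
  · rcases isCross_unique h hab with ⟨h1, h2⟩
    exact Or.inl ⟨h1, h2⟩
  · rcases isCross_unique h hab with ⟨h1, h2⟩
    exact Or.inr ⟨h2, h1⟩

theorem crossing_onLine_left {w : List (Fin n)} {c : ℕ} {l m : Fin (n+1)}
    (h : Crossing w c l m) : OnLine w l (Sum.inl c) := by
  rcases h with h | h
  · exact ⟨l, m, h, Or.inl rfl⟩
  · exact ⟨m, l, h, Or.inr rfl⟩

theorem crossing_onLine {w : List (Fin n)} {c : ℕ} {l m₁ m₂ : Fin (n+1)}
    (h : Crossing w c m₁ m₂) (hl : m₁ = l ∨ m₂ = l) : OnLine w l (Sum.inl c) := by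
  rcases h with h | h
  · exact ⟨m₁, m₂, h, hl.elim (fun e => Or.inl e.symm) (fun e => Or.inr e.symm)⟩
  · exact ⟨m₂, m₁, h, hl.elim (fun e => Or.inr e.symm) (fun e => Or.inl e.symm)⟩

/-- The relative order of two lines, one of which carries an edge, is constant along
the edge. -/
theorem edge_ord_const {w : List (Fin n)} {l m₁ m₂ : Fin (n+1)} {x y : V n}
    (hE : EdgeOn w l x y) (hl : m₁ = l ∨ m₂ = l)
    {c c' : ℕ} (h1 : pos w x < c) (h2 : c ≤ c') (h3 : c' ≤ pos w y) :
    (hgt w c' m₁ < hgt w c' m₂ ↔ hgt w c m₁ < hgt w c m₂) := by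
  induction c', h2 using Nat.le_induction with
  | base => exact Iff.rfl
  | succ k hk ih =>
    have h3' : k ≤ pos w y := by omega
    rw [← ih h3']
    by_cases hlen : k < w.length
    · apply hgt_succ_lt_iff hlen
      intro hcr
      exact hE.2.2.2 k (by omega) (by omega) (crossing_onLine hcr hl)
    · rw [hgt_stable (by omega), hgt_stable (by omega)]

/-- A path edge lies strictly below (resp. above) a line as soon as it does at one column
of its span. -/
theorem belowOn_of_sample {w : List (Fin n)} {l m₁ m₂ : Fin (n+1)} {x y : V n}
    (hE : EdgeOn w l x y) (hl : m₁ = l ∨ m₂ = l) {c0 : ℕ}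
    (h1 : pos w x < c0) (h2 : c0 ≤ pos w y) (hs : hgt w c0 m₁ < hgt w c0 m₂) :
    ∀ c, pos w x < c → c ≤ pos w y → hgt w c m₁ < hgt w c m₂ := by
  intro c hc1 hc2
  rcases le_or_gt c c0 with h | h
  · exact (edge_ord_const hE hl hc1 h h2).1 hs
  · exact (edge_ord_const hE hl h1 h.le hc2).2 hs

theorem onLine_inl_lt {w : List (Fin n)} {l : Fin (n+1)} {t : ℕ}
    (h : OnLine w l (Sum.inl t)) : t < w.length := by
  obtain ⟨a, b, hab, _⟩ := h
  exact isCross_lt_length hab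

theorem pos_le_of_onLine {w : List (Fin n)} {l : Fin (n+1)} {v : V n}
    (h : OnLine w l v) : pos w v ≤ w.length := by
  cases v with
  | inl t => exact (onLine_inl_lt h).le
  | inr k => exact le_rfl

variable {wd ext : List (Fin n)}

theorem isCross_prefix_iff {t : ℕ} (ht : t < wd.length) {a b : Fin (n+1)} :
    IsCross (wd ++ ext) t a b ↔ IsCross wd t a b := by
  have htake : (wd ++ ext).take t = wd.take t :=
    List.take_append_of_le_length (by omega)
  have hget : ∀ (h : t < (wd ++ ext).length), (wd ++ ext).get ⟨t, h⟩ = wd.get ⟨t, ht⟩ := by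
    intro h
    simp [List.getElem_append_left, ht]
  constructor
  · rintro ⟨h, ha, hb⟩
    exact ⟨ht, by rw [← ha, htake, hget], by rw [← hb, htake, hget]⟩
  · rintro ⟨h, ha, hb⟩
    refine ⟨by simp; omega, ?_, ?_⟩
    · rw [← ha, htake, hget]
    · rw [← hb, htake, hget]

theorem onLine_inl_prefix_iff {t : ℕ} (ht : t < wd.length) {l : Fin (n+1)} :
    OnLine (wd ++ ext) l (Sum.inl t) ↔ OnLine wd l (Sum.inl t) := by
  constructor <;> rintro ⟨a, b, hab, hl⟩
  · exact ⟨a, b, (isCross_prefix_iff ht).1 hab, hl⟩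
  · exact ⟨a, b, (isCross_prefix_iff ht).2 hab, hl⟩

theorem hgt_cut (l : Fin (n+1)) : hgt (wd ++ ext) wd.length l = heightPerm wd l := by
  unfold hgt
  rw [List.take_left]

/-- Translation of an edge whose endpoints are both crossings of the `wd`-part. -/
theorem edgeOn_restrict_mid {l : Fin (n+1)} {t s : ℕ} (ht : t < wd.length) (hs : s < wd.length)
    (hE : EdgeOn (wd ++ ext) l (Sum.inl t) (Sum.inl s)) : EdgeOn wd l (Sum.inl t) (Sum.inl s) := by
  obtain ⟨h1, h2, h3, h4⟩ := hE
  refine ⟨(onLine_inl_prefix_iff ht).1 h1, (onLine_inl_prefix_iff hs).1 h2, h3, ?_⟩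
  intro c hc1 hc2 hOn
  have hcN : c < wd.length := lt_trans hc2 hs
  exact h4 c hc1 hc2 ((onLine_inl_prefix_iff hcN).2 hOn)

/-- Translation of an edge leaving the `wd`-part: it is cut off at the right endpoint. -/
theorem edgeOn_restrict_out {l : Fin (n+1)} {t : ℕ} {x : V n} (ht : t < wd.length)
    (hx : wd.length ≤ pos (wd ++ ext) x)
    (hE : EdgeOn (wd ++ ext) l (Sum.inl t) x) : EdgeOn wd l (Sum.inl t) (Sum.inr l) := by
  obtain ⟨h1, h2, h3, h4⟩ := hE
  refine ⟨(onLine_inl_prefix_iff ht).1 h1, rfl, ht, ?_⟩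
  intro c hc1 hc2 hOn
  have hcN : c < wd.length := hc2
  exact h4 c hc1 (by omega) ((onLine_inl_prefix_iff hcN).2 hOn)


/-- An edge of the path `p`, from the `k`-th to the `k+1`-st vertex, on line `l`, with
geometric left endpoint `x` and right endpoint `y`. -/
def PathEdge (w : List (Fin n)) (i : Fin n) (p : List (V n)) (k : ℕ)
    (l : Fin (n+1)) (x y : V n) : Prop :=
  ∃ h : k + 1 < p.length,
    ((x = p[k+1]'h ∧ y = p[k]'(by omega) ∧ Leftward i l) ∨
     (x = p[k]'(by omega) ∧ y = p[k+1]'h ∧ ¬ Leftward i l)) ∧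
    EdgeOn w l x y

theorem step_to_pathEdge {w : List (Fin n)} {i : Fin n} {p : List (V n)}
    (hch : p.Chain' (Step w i)) {k : ℕ} (h : k + 1 < p.length) :
    ∃ l x y, PathEdge w i p k l x y := by
  have hst : Step w i (p.get ⟨k, by omega⟩) (p.get ⟨k+1, h⟩) :=
    List.isChain_iff_getElem.1 hch k (by omega)
  simp only [List.get_eq_getElem] at hst
  rcases hst with ⟨l, ⟨hl, hE⟩ | ⟨hl, hE⟩⟩
  · exact ⟨l, _, _, ⟨h, Or.inl ⟨rfl, rfl, hl⟩, hE⟩⟩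
  · exact ⟨l, _, _, ⟨h, Or.inr ⟨rfl, rfl, hl⟩, hE⟩⟩

theorem getElem_zero_of_head? {α : Type*} {p : List α} {v : α} (h : p.head? = some v)
    (h0 : 0 < p.length) : p[0] = v := by
  cases p with
  | nil => simp at h0
  | cons a q =>
    simp only [List.head?_cons, Option.some.injEq] at h
    simpa using h

theorem getElem_last_of_getLast? {α : Type*} {p : List α} {v : α} (h : p.getLast? = some v)
    (h0 : p.length - 1 < p.length) : p[p.length - 1] = v := by
  rw [List.getLast?_eq_getElem?, List.getElem?_eq_getElem h0] at h
  simpa using h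

/-- The vertex shared by two consecutive path edges is a crossing. -/
theorem shared_not_inr {w : List (Fin n)} {i : Fin n} {p : List (V n)} {k : ℕ}
    {l l' : Fin (n+1)} {x y x' y' : V n}
    (h1 : PathEdge w i p k l x y) (h2 : PathEdge w i p (k+1) l' x' y') :
    ∃ t : ℕ, ∃ h : k + 1 < p.length, p[k+1]'h = Sum.inl t := by
  obtain ⟨hk1, ho1, hE1⟩ := h1
  obtain ⟨hk2, ho2, hE2⟩ := h2
  cases hv : p[k+1]'hk1 with
  | inl t => exact ⟨t, hk1, hv⟩
  | inr kk =>
    exfalso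
    have hv' : p[(k+1)]'(by omega : k+1 < p.length) = Sum.inr kk := hv
    rcases ho1 with ⟨hx, hy, hlw⟩ | ⟨hx, hy, hlw⟩
    · have hxv : x = Sum.inr kk := by rw [hx]; exact hv
      rw [hxv] at hE1
      have hle := pos_le_of_onLine hE1.2.1
      have h3 := hE1.2.2.1
      simp only [pos] at h3 hle
      omega
    · have hyv : y = Sum.inr kk := by rw [hy]; exact hv
      rw [hyv] at hE1
      have hlkk : l = kk := hE1.2.1
      rcases ho2 with ⟨hx', hy', hlw'⟩ | ⟨hx', hy', hlw'⟩
      · have hy'v : y' = Sum.inr kk := by rw [hy']; exact hv'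
        rw [hy'v] at hE2
        have hl'kk : l' = kk := hE2.2.1
        rw [hlkk] at hlw
        rw [hl'kk] at hlw'
        exact hlw hlw'
      · have hx'v : x' = Sum.inr kk := by rw [hx']; exact hv'
        rw [hx'v] at hE2
        have hle := pos_le_of_onLine hE2.2.1
        have h3 := hE2.2.2.1
        simp only [pos] at h3 hle
        omega


theorem shared_cross_data {w : List (Fin n)} {i : Fin n} {p : List (V n)}
    (hcl : ∀ t (a b : Fin (n+1)), IsCross w t a b → a < b)
    {k : ℕ} {l l' : Fin (n+1)} {x y x' y' : V n}
    (h1 : PathEdge w i p k l x y) (h2 : PathEdge w i p (k+1) l' x' y') :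
    ∃ (t : ℕ) (a b : Fin (n+1)) (ht : t < w.length),
      (∃ hk : k + 1 < p.length, p[k+1]'hk = Sum.inl t) ∧
      IsCross w t a b ∧ a < b ∧ (l = a ∨ l = b) ∧ (l' = a ∨ l' = b) ∧
      hgt w t a = (w.get ⟨t, ht⟩).castSucc ∧ hgt w t b = (w.get ⟨t, ht⟩).succ ∧
      hgt w (t+1) a = (w.get ⟨t, ht⟩).succ ∧ hgt w (t+1) b = (w.get ⟨t, ht⟩).castSucc := by
  obtain ⟨t, hk, hv⟩ := shared_not_inr h1 h2
  obtain ⟨hk1, ho1, hE1⟩ := h1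
  obtain ⟨hk2, ho2, hE2⟩ := h2
  have hOn1 : OnLine w l (Sum.inl t) := by
    rcases ho1 with ⟨hx, hy, _⟩ | ⟨hx, hy, _⟩
    · have hxv : x = Sum.inl t := by rw [hx]; exact hv
      rw [hxv] at hE1
      exact hE1.1
    · have hyv : y = Sum.inl t := by rw [hy]; exact hv
      rw [hyv] at hE1
      exact hE1.2.1
  have hOn2 : OnLine w l' (Sum.inl t) := by
    rcases ho2 with ⟨hx', hy', _⟩ | ⟨hx', hy', _⟩
    · have hy'v : y' = Sum.inl t := by rw [hy']; exact hv
      rw [hy'v] at hE2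
      exact hE2.2.1
    · have hx'v : x' = Sum.inl t := by rw [hx']; exact hv
      rw [hx'v] at hE2
      exact hE2.1
  obtain ⟨a, b, hab, hla⟩ := hOn1
  obtain ⟨a2, b2, hab2, hl'2⟩ := hOn2
  obtain ⟨haa, hbb⟩ := isCross_unique hab2 hab
  rw [haa, hbb] at hl'2
  obtain ⟨ht, Ha, Hb, Ha', Hb'⟩ := isCross_hgt hab
  exact ⟨t, a, b, ht, ⟨hk, hv⟩, hab, hcl _ _ _ hab, hla, hl'2, Ha, Hb, Ha', Hb'⟩

/-- Every edge of a GP path lies weakly below the line `i` (forward induction). -/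
theorem edge_below {w : List (Fin n)} {i : Fin n} {p : List (V n)}
    (hcl : ∀ t (a b : Fin (n+1)), IsCross w t a b → a < b)
    (hch : p.Chain' (Step w i))
    (hhead : p.head? = some (Sum.inr i.castSucc)) :
    ∀ k (l : Fin (n+1)) (x y : V n), PathEdge w i p k l x y →
      l = i.castSucc ∨ ∀ c, pos w x < c → c ≤ pos w y →
        hgt w c l < hgt w c i.castSucc := by
  intro k
  induction k with
  | zero =>
    intro l x y h1
    obtain ⟨hk1, ho1, hE1⟩ := h1
    have h0 : p[0] = Sum.inr i.castSucc := getElem_zero_of_head? hhead (by omega)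
    left
    rcases ho1 with ⟨hx, hy, _⟩ | ⟨hx, hy, _⟩
    · have hyv : y = Sum.inr i.castSucc := by rw [hy]; exact h0
      rw [hyv] at hE1
      exact hE1.2.1
    · have hxv : x = Sum.inr i.castSucc := by rw [hx]; exact h0
      rw [hxv] at hE1
      exact hE1.1
  | succ k ih =>
    intro l' x' y' h2
    obtain ⟨hk2, -, -⟩ := id h2
    obtain ⟨l, x, y, h1⟩ := step_to_pathEdge hch (show k+1 < p.length by omega)
    obtain ⟨t, a, b, ht, ⟨hk1, hv⟩, hab, hablt, hla, hl'b, Ha, Hb, Ha', Hb'⟩ :=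
      shared_cross_data hcl h1 h2
    by_cases hl'ic : l' = i.castSucc
    · exact Or.inl hl'ic
    right
    have hcs : (w.get ⟨t, ht⟩).castSucc < (w.get ⟨t, ht⟩).succ := by
      simp [Fin.lt_def]
    have key : (Leftward i l' → hgt w t l' < hgt w t i.castSucc) ∧
        (¬ Leftward i l' → hgt w (t+1) l' < hgt w (t+1) i.castSucc) := by
      by_cases hica : i.castSucc = a
      · have hl'bb : l' = b := by
          rcases hl'b with h | h
          · exact absurd (h.trans hica.symm) hl'ic
          · exact h
        constructor
        · intro hlw
          exfalso
          have hib : i.castSucc < b := hica ▸ hablt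
          rw [hl'bb] at hlw
          simp only [Leftward] at hlw
          simp only [Fin.lt_def, Fin.coe_castSucc] at hib
          omega
        · intro _
          rw [hl'bb, Hb', hica, Ha']
          exact hcs
      · by_cases hicb : i.castSucc = b
        · have hl'aa : l' = a := by
            rcases hl'b with h | h
            · exact h
            · exact absurd (h.trans hicb.symm) hl'ic
          constructor
          · intro _
            rw [hl'aa, Ha, hicb, Hb]
            exact hcs
          · intro hlw
            exfalso
            have hai : a < i.castSucc := hicb ▸ hablt
            rw [hl'aa] at hlw
            simp only [Leftward] at hlw
            simp only [Fin.lt_def, Fin.coe_castSucc] at hai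
            omega
        · -- the line `i` is not involved in the crossing at `t`
          have hTn : ∀ m : Fin (n+1), (m = a ∨ m = b) →
              (hgt w (t+1) m < hgt w (t+1) i.castSucc ↔
                hgt w t m < hgt w t i.castSucc) := by
            intro m hm
            apply hgt_succ_lt_iff ht
            intro hcr
            rcases crossing_mem hcr hab with ⟨h1', h2'⟩ | ⟨h1', h2'⟩
            · exact hicb h2'
            · exact hica h2'
          have hlic : l ≠ i.castSucc := by
            intro h
            rcases hla with h' | h'
            · exact hica (h.symm.trans h')
            · exact hicb (h.symm.trans h')
          have hB : ∀ c, pos w x < c → c ≤ pos w y →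
              hgt w c l < hgt w c i.castSucc := by
            rcases ih l x y h1 with h | h
            · exact absurd h hlic
            · exact h
          obtain ⟨hk1', ho1, hE1⟩ := h1
          have hlt : hgt w t l < hgt w t i.castSucc := by
            rcases ho1 with ⟨hx, hy, hlw⟩ | ⟨hx, hy, hlw⟩
            · have hxv : x = Sum.inl t := by rw [hx]; exact hv
              have hpx : pos w x = t := by rw [hxv]; rfl
              have hyb := hE1.2.2.1
              rw [hpx] at hyb
              exact (hTn l hla).1 (hB (t+1) (by omega) (by omega))
            · have hyv : y = Sum.inl t := by rw [hy]; exact hv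
              have hpy : pos w y = t := by rw [hyv]; rfl
              have hxb := hE1.2.2.1
              rw [hpy] at hxb
              exact hB t (by omega) (by omega)
          have hlt' : hgt w t l' < hgt w t i.castSucc := by
            by_cases hll : l' = l
            · rw [hll]; exact hlt
            · have hicjc : hgt w t i.castSucc ≠ hgt w t a := by
                intro h
                exact hica (hgt_inj h)
              have hicjs : hgt w t i.castSucc ≠ hgt w t b := by
                intro h
                exact hicb (hgt_inj h)
              have hjsv : ((w.get ⟨t, ht⟩).succ : Fin (n+1)).val
                  = ((w.get ⟨t, ht⟩).castSucc : Fin (n+1)).val + 1 := rfl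
              rw [Ha] at hicjc
              rw [Hb] at hicjs
              have hl'v : hgt w t l' = (w.get ⟨t, ht⟩).castSucc
                  ∨ hgt w t l' = (w.get ⟨t, ht⟩).succ := by
                rcases hl'b with h | h
                · exact Or.inl (h ▸ Ha)
                · exact Or.inr (h ▸ Hb)
              have hlv : hgt w t l = (w.get ⟨t, ht⟩).castSucc
                  ∨ hgt w t l = (w.get ⟨t, ht⟩).succ := by
                rcases hla with h | h
                · exact Or.inl (h ▸ Ha)
                · exact Or.inr (h ▸ Hb)
              have hne1 : (hgt w t i.castSucc).val
                  ≠ ((w.get ⟨t, ht⟩).castSucc : Fin (n+1)).val :=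
                fun h => hicjc (Fin.ext h)
              have hne2 : (hgt w t i.castSucc).val
                  ≠ ((w.get ⟨t, ht⟩).succ : Fin (n+1)).val :=
                fun h => hicjs (Fin.ext h)
              simp only [Fin.lt_def] at hlt ⊢
              rcases hl'v with h' | h' <;> rcases hlv with h'' | h'' <;>
                rw [h'] <;> rw [h''] at hlt <;> omega
          exact ⟨fun _ => hlt', fun _ => (hTn l' hl'b).2 hlt'⟩
    obtain ⟨hk2', ho2, hE2⟩ := h2
    rcases ho2 with ⟨hx', hy', hlw'⟩ | ⟨hx', hy', hlw'⟩
    · have hy'v : y' = Sum.inl t := by rw [hy']; exact hv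
      have hpy : pos w y' = t := by rw [hy'v]; rfl
      have hxb := hE2.2.2.1
      rw [hpy] at hxb
      exact belowOn_of_sample hE2 (Or.inl rfl) (c0 := t) (by omega) (by omega)
        (key.1 hlw')
    · have hx'v : x' = Sum.inl t := by rw [hx']; exact hv
      have hpx : pos w x' = t := by rw [hx'v]; rfl
      have hyb := hE2.2.2.1
      rw [hpx] at hyb
      exact belowOn_of_sample hE2 (Or.inl rfl) (c0 := t+1) (by omega) (by omega)
        (key.2 hlw')

/-- Every edge of a GP path lies weakly above the line `i+1` (backward induction). -/
theorem edge_above {w : List (Fin n)} {i : Fin n} {p : List (V n)}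
    (hcl : ∀ t (a b : Fin (n+1)), IsCross w t a b → a < b)
    (hch : p.Chain' (Step w i))
    (hlast : p.getLast? = some (Sum.inr i.succ)) :
    ∀ d k (l : Fin (n+1)) (x y : V n), p.length = k + 2 + d → PathEdge w i p k l x y →
      l = i.succ ∨ ∀ c, pos w x < c → c ≤ pos w y →
        hgt w c i.succ < hgt w c l := by
  intro d
  induction d with
  | zero =>
    intro k l x y hlen h1
    obtain ⟨hk1, ho1, hE1⟩ := h1
    have hlast' : p[k+1]'hk1 = Sum.inr i.succ := by
      have hidx : p.length - 1 = k + 1 := by omega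
      have h := getElem_last_of_getLast? hlast (by omega)
      simp only [hidx] at h
      exact h
    left
    rcases ho1 with ⟨hx, hy, _⟩ | ⟨hx, hy, _⟩
    · have hxv : x = Sum.inr i.succ := by rw [hx]; exact hlast'
      rw [hxv] at hE1
      exact hE1.1
    · have hyv : y = Sum.inr i.succ := by rw [hy]; exact hlast'
      rw [hyv] at hE1
      exact hE1.2.1
  | succ d ihd =>
    intro k l x y hlen h1
    obtain ⟨l', x', y', h2⟩ := step_to_pathEdge hch (show (k+1)+1 < p.length by omega)
    have hIH := ihd (k+1) l' x' y' (by omega) h2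
    obtain ⟨t, a, b, ht, ⟨hk1, hv⟩, hab, hablt, hla, hl'b, Ha, Hb, Ha', Hb'⟩ :=
      shared_cross_data hcl h1 h2
    by_cases hlis : l = i.succ
    · exact Or.inl hlis
    right
    have hcs : (w.get ⟨t, ht⟩).castSucc < (w.get ⟨t, ht⟩).succ := by
      simp [Fin.lt_def]
    have key : (Leftward i l → hgt w (t+1) i.succ < hgt w (t+1) l) ∧
        (¬ Leftward i l → hgt w t i.succ < hgt w t l) := by
      by_cases hisa : i.succ = a
      · have hlb : l = b := by
          rcases hla with h | h
          · exact absurd (h.trans hisa.symm) hlis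
          · exact h
        constructor
        · intro hlw
          exfalso
          have hib : i.succ < b := hisa ▸ hablt
          rw [hlb] at hlw
          simp only [Leftward] at hlw
          simp only [Fin.lt_def, Fin.val_succ] at hib
          omega
        · intro _
          rw [hlb, Hb, hisa, Ha]
          exact hcs
      · by_cases hisb : i.succ = b
        · have hlaa : l = a := by
            rcases hla with h | h
            · exact h
            · exact absurd (h.trans hisb.symm) hlis
          constructor
          · intro _
            rw [hlaa, Ha', hisb, Hb']
            exact hcs
          · intro hlw
            exfalso
            have hai : a < i.succ := hisb ▸ hablt
            rw [hlaa] at hlw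
            simp only [Leftward] at hlw
            simp only [Fin.lt_def, Fin.val_succ] at hai
            omega
        · have hTn : ∀ m : Fin (n+1), (m = a ∨ m = b) →
              (hgt w (t+1) i.succ < hgt w (t+1) m ↔
                hgt w t i.succ < hgt w t m) := by
            intro m hm
            apply hgt_succ_lt_iff ht
            intro hcr
            rcases crossing_mem hcr hab with ⟨h1', h2'⟩ | ⟨h1', h2'⟩
            · exact hisa h1'
            · exact hisb h1'
          have hl'is : l' ≠ i.succ := by
            intro h
            rcases hl'b with h' | h'
            · exact hisa (h.symm.trans h')
            · exact hisb (h.symm.trans h')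
          have hB' : ∀ c, pos w x' < c → c ≤ pos w y' →
              hgt w c i.succ < hgt w c l' := by
            rcases hIH with h | h
            · exact absurd h hl'is
            · exact h
          obtain ⟨hk2', ho2, hE2⟩ := h2
          have hlt : hgt w t i.succ < hgt w t l' := by
            rcases ho2 with ⟨hx', hy', hlw'⟩ | ⟨hx', hy', hlw'⟩
            · have hy'v : y' = Sum.inl t := by rw [hy']; exact hv
              have hpy : pos w y' = t := by rw [hy'v]; rfl
              have hxb := hE2.2.2.1
              rw [hpy] at hxb
              exact hB' t (by omega) (by omega)
            · have hx'v : x' = Sum.inl t := by rw [hx']; exact hv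
              have hpx : pos w x' = t := by rw [hx'v]; rfl
              have hyb := hE2.2.2.1
              rw [hpx] at hyb
              exact (hTn l' hl'b).1 (hB' (t+1) (by omega) (by omega))
          have hlt2 : hgt w t i.succ < hgt w t l := by
            by_cases hll : l = l'
            · rw [hll]; exact hlt
            · have hicjc : hgt w t i.succ ≠ hgt w t a := by
                intro h
                exact hisa (hgt_inj h)
              have hicjs : hgt w t i.succ ≠ hgt w t b := by
                intro h
                exact hisb (hgt_inj h)
              rw [Ha] at hicjc
              rw [Hb] at hicjs
              have hl'v : hgt w t l' = (w.get ⟨t, ht⟩).castSucc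
                  ∨ hgt w t l' = (w.get ⟨t, ht⟩).succ := by
                rcases hl'b with h | h
                · exact Or.inl (h ▸ Ha)
                · exact Or.inr (h ▸ Hb)
              have hlv : hgt w t l = (w.get ⟨t, ht⟩).castSucc
                  ∨ hgt w t l = (w.get ⟨t, ht⟩).succ := by
                rcases hla with h | h
                · exact Or.inl (h ▸ Ha)
                · exact Or.inr (h ▸ Hb)
              have hne1 : (hgt w t i.succ).val
                  ≠ ((w.get ⟨t, ht⟩).castSucc : Fin (n+1)).val :=
                fun h => hicjc (Fin.ext h)
              have hne2 : (hgt w t i.succ).val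
                  ≠ ((w.get ⟨t, ht⟩).succ : Fin (n+1)).val :=
                fun h => hicjs (Fin.ext h)
              have hjsv : ((w.get ⟨t, ht⟩).succ : Fin (n+1)).val
                  = ((w.get ⟨t, ht⟩).castSucc : Fin (n+1)).val + 1 := rfl
              simp only [Fin.lt_def] at hlt ⊢
              rcases hl'v with h' | h' <;> rcases hlv with h'' | h'' <;>
                rw [h''] <;> rw [h'] at hlt <;> omega
          exact ⟨fun _ => (hTn l hla).2 hlt2, fun _ => hlt2⟩
    obtain ⟨hk1', ho1, hE1⟩ := h1
    rcases ho1 with ⟨hx, hy, hlw⟩ | ⟨hx, hy, hlw⟩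
    · have hxv : x = Sum.inl t := by rw [hx]; exact hv
      have hpx : pos w x = t := by rw [hxv]; rfl
      have hyb := hE1.2.2.1
      rw [hpx] at hyb
      exact belowOn_of_sample hE1 (Or.inr rfl) (c0 := t+1) (by omega) (by omega)
        (key.1 hlw)
    · have hyv : y = Sum.inl t := by rw [hy]; exact hv
      have hpy : pos w y = t := by rw [hyv]; rfl
      have hxb := hE1.2.2.1
      rw [hpy] at hxb
      exact belowOn_of_sample hE1 (Or.inr rfl) (c0 := t) (by omega) (by omega)
        (key.2 hlw)


/-- The filtering predicate of `resPath`. -/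
def Fpred (wd : List (Fin n)) : V n → Bool := fun v => match v with
  | Sum.inl t => decide (t < wd.length)
  | Sum.inr _ => false

theorem inside_val {wd : List (Fin n)} {v : V n} (h : Fpred wd v = true) :
    ∃ t, v = Sum.inl t ∧ t < wd.length := by
  cases v with
  | inl t =>
    refine ⟨t, rfl, ?_⟩
    simpa [Fpred] using h
  | inr k => simp [Fpred] at h

theorem outside_pos {wd : List (Fin n)} (ext : List (Fin n)) {v : V n}
    (h : Fpred wd v = false) : wd.length ≤ pos (wd ++ ext) v := by
  cases v with
  | inl t =>
    have : ¬ t < wd.length := by simpa [Fpred] using h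
    simpa [pos] using by omega
  | inr k =>
    simp [pos, List.length_append]

theorem inside_pos {wd : List (Fin n)} (ext : List (Fin n)) {v : V n}
    (h : Fpred wd v = true) : pos (wd ++ ext) v < wd.length := by
  obtain ⟨t, rfl, ht⟩ := inside_val h
  simpa [pos] using ht

theorem infix_pair_index {α : Type*} {x y : α} {p : List α} (h : [x, y] <:+: p) :
    ∃ k, ∃ hk : k + 1 < p.length, p[k]'(by omega) = x ∧ p[k+1]'hk = y := by
  obtain ⟨s, t2, rfl⟩ := h
  have hlen : (s ++ [x, y] ++ t2).length = s.length + 2 + t2.length := by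
    simp [List.length_append]
    omega
  refine ⟨s.length, by omega, ?_, ?_⟩
  · rw [List.getElem_append_left (by simp : s.length < (s ++ [x, y]).length)]
    rw [List.getElem_append_right (le_refl s.length)]
    simp
  · rw [List.getElem_append_left (by simp : s.length + 1 < (s ++ [x, y]).length)]
    rw [List.getElem_append_right (by omega : s.length ≤ s.length + 1)]
    simp

theorem infix_triple_index {α : Type*} {x y z : α} {p : List α} (h : [x, y, z] <:+: p) :
    ∃ k, ∃ hk : k + 2 < p.length, p[k]'(by omega) = x ∧ p[k+1]'(by omega) = y ∧
      p[k+2]'hk = z := by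
  obtain ⟨s, t2, rfl⟩ := h
  have hlen : (s ++ [x, y, z] ++ t2).length = s.length + 3 + t2.length := by
    simp [List.length_append]
    omega
  refine ⟨s.length, by omega, ?_, ?_, ?_⟩
  · rw [List.getElem_append_left (by simp : s.length < (s ++ [x, y, z]).length)]
    rw [List.getElem_append_right (le_refl s.length)]
    simp
  · rw [List.getElem_append_left (by simp : s.length + 1 < (s ++ [x, y, z]).length)]
    rw [List.getElem_append_right (by omega : s.length ≤ s.length + 1)]
    simp
  · rw [List.getElem_append_left (by simp : s.length + 2 < (s ++ [x, y, z]).length)]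
    rw [List.getElem_append_right (by omega : s.length ≤ s.length + 2)]
    simp

theorem index_infix_triple {α : Type*} {p : List α} {k : ℕ} (hk : k + 2 < p.length) :
    [p[k]'(by omega), p[k+1]'(by omega), p[k+2]'hk] <:+: p := by
  refine ⟨p.take k, p.drop (k+3), ?_⟩
  conv_rhs => rw [← List.take_append_drop k p]
  rw [List.append_assoc]
  congr 1
  rw [List.drop_eq_getElem_cons (by omega : k < p.length),
    List.drop_eq_getElem_cons (by omega : k + 1 < p.length),
    List.drop_eq_getElem_cons (by omega : k + 2 < p.length)]
  simp

theorem chain'_rel_of_infix_pair {α : Type*} {R : α → α → Prop} {p : List α} {x y : α}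
    (hch : p.Chain' R) (h : [x, y] <:+: p) : R x y := by
  obtain ⟨k, hk, hx, hy⟩ := infix_pair_index h
  have := List.isChain_iff_getElem.1 hch k (by omega)
  rw [hx, hy] at this
  exact this

theorem chain'_of_infix_pairs {α : Type*} {R : α → α → Prop} :
    ∀ l : List α, (∀ u v, [u, v] <:+: l → R u v) → l.Chain' R := by
  intro l
  induction l with
  | nil => intro _; exact List.isChain_nil
  | cons a l ih =>
    intro h
    cases l with
    | nil => exact List.isChain_singleton _
    | cons b l' =>
      refine List.isChain_cons_cons.2 ⟨h a b ⟨[], l', rfl⟩, ih ?_⟩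
      intro u v huv
      exact h u v (huv.trans ((List.suffix_cons a (b :: l')).isInfix))

theorem dropWhile_head_false {α : Type*} (P : α → Bool) :
    ∀ (l : List α) {z : α} {t : List α}, l.dropWhile P = z :: t → P z = false := by
  intro l
  induction l with
  | nil => intro z t h; simp [List.dropWhile] at h
  | cons a l ih =>
    intro z t h
    by_cases ha : P a
    · rw [List.dropWhile_cons_of_pos ha] at h
      exact ih h
    · rw [List.dropWhile_cons_of_neg ha] at h
      cases h
      simpa using ha

theorem getElem_sandwich {α : Type*} (A B : α) (mid : List α) (j : ℕ)
    (hj : j < mid.length + 2) :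
    (A :: (mid ++ [B]))[j]'(by simp; omega) =
      if h0 : j = 0 then A else if hm : j ≤ mid.length then mid[j-1]'(by omega) else B := by
  split_ifs with h0 hm
  · subst h0; rfl
  · obtain ⟨j', rfl⟩ : ∃ j', j = j' + 1 := ⟨j - 1, by omega⟩
    rw [List.getElem_cons_succ]
    rw [List.getElem_append_left (by omega : j' < mid.length)]
    congr 1
  · obtain ⟨j', rfl⟩ : ∃ j', j = j' + 1 := ⟨j - 1, by omega⟩
    rw [List.getElem_cons_succ]
    rw [List.getElem_append_right (by omega : mid.length ≤ j')]
    have : j' - mid.length = 0 := by omega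
    simp [this]

theorem step_restrict {wd ext : List (Fin n)} {i : Fin n} {u v : V n}
    (hu : Fpred wd u = true) (hvv : Fpred wd v = true)
    (hst : Step (wd ++ ext) i u v) : Step wd i u v := by
  obtain ⟨tu, rfl, htu⟩ := inside_val hu
  obtain ⟨tv, rfl, htv⟩ := inside_val hvv
  rcases hst with ⟨l, ⟨hlw, hE⟩ | ⟨hlw, hE⟩⟩
  · exact ⟨l, Or.inl ⟨hlw, edgeOn_restrict_mid htv htu hE⟩⟩
  · exact ⟨l, Or.inr ⟨hlw, edgeOn_restrict_mid htu htv hE⟩⟩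

theorem entry_data {wd ext : List (Fin n)} {i : Fin n} {p0 : List (V n)}
    (hch : p0.Chain' (Step (wd ++ ext) i))
    (hcl : ∀ t (a b : Fin (n+1)), IsCross (wd ++ ext) t a b → a < b)
    (hhead : p0.head? = some (Sum.inr i.castSucc))
    (hlast : p0.getLast? = some (Sum.inr i.succ))
    {x y : V n} (hxy : [x, y] <:+: p0)
    (hx : Fpred wd x = false) (hy : Fpred wd y = true) :
    ∃ a' : Fin (n+1), a'.val ≤ i.val ∧ EdgeOn (wd ++ ext) a' y x ∧
      OnLine (wd ++ ext) a' x ∧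
      heightPerm wd i.succ ≤ heightPerm wd a' ∧
      heightPerm wd a' ≤ heightPerm wd i.castSucc := by
  obtain ⟨k, hk, hpx, hpy⟩ := infix_pair_index hxy
  have hst : Step (wd ++ ext) i x y := by
    have := List.isChain_iff_getElem.1 hch k (by omega)
    rw [hpx, hpy] at this
    exact this
  have hposx : wd.length ≤ pos (wd ++ ext) x := outside_pos ext hx
  have hposy : pos (wd ++ ext) y < wd.length := inside_pos ext hy
  rcases hst with ⟨l, ⟨hlw, hE⟩ | ⟨hlw, hE⟩⟩
  swap
  · exfalso
    have := hE.2.2.1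
    omega
  have hlwv : l.val ≤ i.val := hlw
  have hPE : PathEdge (wd ++ ext) i p0 k l y x :=
    ⟨hk, Or.inl ⟨hpy.symm, hpx.symm, hlw⟩, hE⟩
  have hbelow := edge_below hcl hch hhead k l y x hPE
  have habove := edge_above hcl hch hlast (p0.length - (k+2)) k l y x (by omega) hPE
  refine ⟨l, hlw, hE, hE.2.1, ?_, ?_⟩
  · rcases habove with h | h
    · exfalso
      have : l.val = i.val + 1 := by rw [h]; rfl
      omega
    · have := h wd.length (by omega) (by omega)
      rw [hgt_cut, hgt_cut] at this
      exact this.le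
  · rcases hbelow with h | h
    · rw [h]
    · have := h wd.length (by omega) (by omega)
      rw [hgt_cut, hgt_cut] at this
      exact this.le

theorem exit_data {wd ext : List (Fin n)} {i : Fin n} {p0 : List (V n)}
    (hch : p0.Chain' (Step (wd ++ ext) i))
    (hcl : ∀ t (a b : Fin (n+1)), IsCross (wd ++ ext) t a b → a < b)
    (hhead : p0.head? = some (Sum.inr i.castSucc))
    (hlast : p0.getLast? = some (Sum.inr i.succ))
    {x y : V n} (hxy : [x, y] <:+: p0)
    (hx : Fpred wd x = true) (hy : Fpred wd y = false) :
    ∃ b' : Fin (n+1), i.val < b'.val ∧ EdgeOn (wd ++ ext) b' x y ∧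
      OnLine (wd ++ ext) b' y ∧
      heightPerm wd i.succ ≤ heightPerm wd b' ∧
      heightPerm wd b' ≤ heightPerm wd i.castSucc := by
  obtain ⟨k, hk, hpx, hpy⟩ := infix_pair_index hxy
  have hst : Step (wd ++ ext) i x y := by
    have := List.isChain_iff_getElem.1 hch k (by omega)
    rw [hpx, hpy] at this
    exact this
  have hposx : pos (wd ++ ext) x < wd.length := inside_pos ext hx
  have hposy : wd.length ≤ pos (wd ++ ext) y := outside_pos ext hy
  rcases hst with ⟨l, ⟨hlw, hE⟩ | ⟨hlw, hE⟩⟩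
  · exfalso
    have := hE.2.2.1
    omega
  have hPE : PathEdge (wd ++ ext) i p0 k l x y :=
    ⟨hk, Or.inr ⟨hpx.symm, hpy.symm, hlw⟩, hE⟩
  have hbelow := edge_below hcl hch hhead k l x y hPE
  have habove := edge_above hcl hch hlast (p0.length - (k+2)) k l x y (by omega) hPE
  have hlwv : ¬ l.val ≤ i.val := hlw
  refine ⟨l, by omega, hE, hE.2.1, ?_, ?_⟩
  · rcases habove with h | h
    · rw [h]
    · have := h wd.length (by omega) (by omega)
      rw [hgt_cut, hgt_cut] at this
      exact this.le
  · rcases hbelow with h | h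
    · exfalso
      have : l.val = i.val := by rw [h]; rfl
      omega
    · have := h wd.length (by omega) (by omega)
      rw [hgt_cut, hgt_cut] at this
      exact this.le


/-- Transfer of a 3-term infix between two lists that differ only in their endpoints. -/
theorem triple_transfer {α : Type*} {A B A' B' : α} {mid : List α} {X V Y : α}
    (h : [X, V, Y] <:+: A :: (mid ++ [B])) :
    ∃ X' Y', [X', V, Y'] <:+: A' :: (mid ++ [B']) ∧ V ∈ mid ∧
      ((X = A ∧ X' = A') ∨ (X ∈ mid ∧ X' = X)) ∧
      ((Y = B ∧ Y' = B') ∨ (Y ∈ mid ∧ Y' = Y)) := by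
  obtain ⟨kq, hkq, hX, hV, hY⟩ := infix_triple_index h
  have hlen : (A :: (mid ++ [B])).length = mid.length + 2 := by simp
  have hkd : kq < mid.length := by omega
  have hgV := getElem_sandwich A B mid (kq+1) (by omega)
  rw [dif_neg (by omega), dif_pos (by omega)] at hgV
  have hVm : V = mid[kq]'hkd := by
    rw [← hV, hgV]
    congr 1
  have hVmem : V ∈ mid := by rw [hVm]; exact List.getElem_mem hkd
  have hlen' : (A' :: (mid ++ [B'])).length = mid.length + 2 := by simp
  have htr := index_infix_triple (p := A' :: (mid ++ [B'])) (k := kq) (by omega)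
  have hgV' := getElem_sandwich A' B' mid (kq+1) (by omega)
  rw [dif_neg (by omega), dif_pos (by omega)] at hgV'
  have hmidV : (A' :: (mid ++ [B']))[kq+1]'(by omega) = V := by
    rw [hgV', hVm]
    congr 1
  rw [hmidV] at htr
  refine ⟨(A' :: (mid ++ [B']))[kq]'(by omega), (A' :: (mid ++ [B']))[kq+2]'(by omega),
    htr, hVmem, ?_, ?_⟩
  · have hgX := getElem_sandwich A B mid kq (by omega)
    have hgX' := getElem_sandwich A' B' mid kq (by omega)
    by_cases hk0 : kq = 0
    · rw [dif_pos hk0] at hgX hgX'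
      left
      exact ⟨by rw [← hX, hgX], by rw [hgX']⟩
    · rw [dif_neg hk0, dif_pos (by omega)] at hgX hgX'
      right
      constructor
      · rw [← hX, hgX]
        exact List.getElem_mem (by omega)
      · rw [hgX', ← hX, hgX]
  · have hgY := getElem_sandwich A B mid (kq+2) (by omega)
    have hgY' := getElem_sandwich A' B' mid (kq+2) (by omega)
    by_cases hke : kq + 2 ≤ mid.length
    · rw [dif_neg (by omega), dif_pos hke] at hgY hgY'
      right
      constructor
      · rw [← hY, hgY]
        exact List.getElem_mem (by omega)
      · rw [hgY', ← hY, hgY]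
    · rw [dif_neg (by omega), dif_neg hke] at hgY hgY'
      left
      exact ⟨by rw [← hY, hgY], by rw [hgY']⟩

theorem run_decomp {wd ext : List (Fin n)} {i : Fin n} {p0 : List (V n)}
    (hg : IsGPPath (wd ++ ext) i p0)
    (hcl : ∀ t (a b : Fin (n+1)), IsCross (wd ++ ext) t a b → a < b)
    (hhead : p0.head? = some (Sum.inr i.castSucc))
    (hlast : p0.getLast? = some (Sum.inr i.succ)) :
    ∀ m : ℕ, ∀ s : List (V n), s.length ≤ m → s <:+ p0 →
      ∀ x s', s = x :: s' → Fpred wd x = false →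
      ∃ qs : List (List (V n)), (∀ q ∈ qs, IsGPPath wd i q) ∧
        s.filter (Fpred wd) = (qs.map pathInterior).flatten := by
  intro m
  induction m with
  | zero =>
    intro s hle hsuf x s' hs hFx
    subst hs
    simp at hle
  | succ m ih =>
    intro s hle hsuf x s' hs hFx
    subst hs
    rw [List.filter_cons_of_neg (by simp [hFx])]
    cases s' with
    | nil => exact ⟨[], by simp, by simp⟩
    | cons y s'' =>
      by_cases hFy : Fpred wd y = true
      case neg =>
        have hFy' : Fpred wd y = false := by simpa using hFy
        have hsuf' : (y :: s'') <:+ p0 := (List.suffix_cons x (y :: s'')).trans hsuf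
        have hlen' : (y :: s'').length ≤ m := by
          simp only [List.length_cons] at hle ⊢
          omega
        exact ih (y :: s'') hlen' hsuf' y s'' rfl hFy'
      case pos =>
        have hsuf0 := hsuf
        have hr : (y :: s'').takeWhile (Fpred wd) = y :: s''.takeWhile (Fpred wd) :=
          List.takeWhile_cons_of_pos hFy
        set r := (y :: s'').takeWhile (Fpred wd) with hrdef
        set rest := (y :: s'').dropWhile (Fpred wd) with hrestdef
        have hsr : r ++ rest = y :: s'' :=
          List.takeWhile_append_dropWhile (p := Fpred wd) (l := y :: s'')
        have hrmem : ∀ v ∈ r, Fpred wd v = true := fun v hv => List.mem_takeWhile_imp hv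
        have hrne : r ≠ [] := by rw [hr]; exact List.cons_ne_nil _ _
        obtain ⟨pre, hpre⟩ := hsuf0
        have hlast_s : (y :: s'').getLast? = some (Sum.inr i.succ) := by
          have h1 : (pre ++ (x :: y :: s'')).getLast? = some (Sum.inr i.succ) := by
            rw [hpre]; exact hlast
          rw [List.getLast?_append, List.getLast?_cons_cons] at h1
          cases h2 : (y :: s'').getLast? with
          | none =>
            rw [h2] at h1
            rw [List.getLast?_eq_getLast (l := y :: s'') (List.cons_ne_nil _ _)] at h2
            simp at h2
          | some v =>
            rw [h2] at h1
            simpa using h1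
        have hrestne : rest ≠ [] := by
          intro h0
          have hall : ∀ v ∈ y :: s'', Fpred wd v = true := by
            intro v hv
            apply hrmem
            rw [← hsr, h0, List.append_nil] at hv
            exact hv
          have hmemL : Sum.inr (i.succ : Fin (n+1)) ∈ (y :: s'').getLast? := by
            rw [hlast_s]; rfl
          obtain ⟨hne2, hgl⟩ := List.mem_getLast?_eq_getLast hmemL
          have hmem : Sum.inr (i.succ : Fin (n+1)) ∈ y :: s'' := by
            rw [hgl]; exact List.getLast_mem hne2
          have := hall _ hmem
          simp [Fpred] at this
        obtain ⟨z, t₃, hrest⟩ : ∃ z t₃, rest = z :: t₃ := by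
          cases hrc : rest with
          | nil => exact absurd hrc hrestne
          | cons z t₃ => exact ⟨z, t₃, rfl⟩
        have hFz : Fpred wd z = false :=
          dropWhile_head_false (Fpred wd) (y :: s'') (by rw [← hrestdef]; exact hrest)
        have hyz : y :: s'' = r ++ (z :: t₃) := by rw [← hsr, hrest]
        have hpair1 : [x, y] <:+: p0 := ⟨pre, s'', by rw [← hpre]; simp⟩
        set lr := r.getLast hrne with hlrdef
        have hrd : r.dropLast ++ [lr] = r := List.dropLast_append_getLast hrne
        have hFlr : Fpred wd lr = true := hrmem lr (by rw [← hrd]; simp)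
        have hpair2 : [lr, z] <:+: p0 := by
          refine ⟨pre ++ (x :: r.dropLast), t₃, ?_⟩
          rw [← hpre]
          have hmid : y :: s'' = r.dropLast ++ [lr] ++ (z :: t₃) := by
            rw [hrd, ← hyz]
          rw [hmid]
          simp
        obtain ⟨a', ha'le, hEin, hOnx, ha'lo, ha'hi⟩ :=
          entry_data hg.chain hcl hhead hlast hpair1 hFx hFy
        obtain ⟨b', hb'gt, hEout, hOnz, hb'lo, hb'hi⟩ :=
          exit_data hg.chain hcl hhead hlast hpair2 hFlr hFz
        obtain ⟨ty, hy_eq, hty⟩ := inside_val hFy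
        obtain ⟨tlr, hlr_eq, htlr⟩ := inside_val hFlr
        have hstep_in : Step wd i (Sum.inr a') y := by
          refine ⟨a', Or.inl ⟨ha'le, ?_⟩⟩
          rw [hy_eq]
          exact edgeOn_restrict_out hty (outside_pos ext hFx)
            (by rw [← hy_eq]; exact hEin)
        have hstep_out : Step wd i lr (Sum.inr b') := by
          refine ⟨b', Or.inr ⟨by simp only [Leftward]; omega, ?_⟩⟩
          rw [hlr_eq]
          exact edgeOn_restrict_out htlr (outside_pos ext hFz)
            (by rw [← hlr_eq]; exact hEout)
        have hrinf : r <:+: p0 := by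
          refine ⟨pre ++ [x], z :: t₃, ?_⟩
          rw [← hpre, hyz]
          simp
        set q : List (V n) := Sum.inr a' :: (r ++ [Sum.inr b']) with hqdef
        have hchain_q : q.Chain' (Step wd i) := by
          have hchr : r.Chain' (Step wd i) := by
            apply chain'_of_infix_pairs
            intro u v huv
            have hst0 : Step (wd ++ ext) i u v :=
              chain'_rel_of_infix_pair hg.chain (huv.trans hrinf)
            have hum : u ∈ r := huv.sublist.subset (by simp)
            have hvm : v ∈ r := huv.sublist.subset (by simp)
            exact step_restrict (hrmem u hum) (hrmem v hvm) hst0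
          have hch2 : (r ++ [Sum.inr b']).Chain' (Step wd i) := by
            apply List.isChain_append.2
            refine ⟨hchr, List.isChain_singleton _, ?_⟩
            intro u hu v hv
            have hu' : r.getLast hrne = u := by
              rw [List.getLast?_eq_getLast (l := r) hrne] at hu
              simpa using hu
            have hv' : Sum.inr b' = v := by simpa using hv
            rw [← hu', ← hv']
            exact hstep_out
          apply List.isChain_cons.2
          refine ⟨?_, hch2⟩
          intro v hv
          have hhd : (r ++ [Sum.inr b']).head? = some y := by
            rw [hr]
            rfl
          rw [hhd] at hv
          have hv' : y = v := by simpa using hv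
          rw [← hv']
          exact hstep_in
        have hrig_q : Rigorous wd i q := by
          intro X V Y hXY hFb
          obtain ⟨X', Y', htr, hVmem, hXc, hYc⟩ :=
            triple_transfer (A := Sum.inr a') (B := Sum.inr b') (A' := x) (B' := z)
              (mid := r) (by rw [← hqdef]; exact hXY)
          have hs0inf : (x :: (r ++ [z])) <:+: p0 := by
            refine ⟨pre, t₃, ?_⟩
            rw [← hpre, hyz]
            simp
          have htrp0 : [X', V, Y'] <:+: p0 := htr.trans hs0inf
          obtain ⟨tt, aa, bb, ll, ll', hV, hC, hset, hOX, hOY, hcond⟩ := hFb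
          have httlt : tt < wd.length := isCross_lt_length hC
          apply hg.rigorous X' V Y' htrp0
          refine ⟨tt, aa, bb, ll, ll', hV, (isCross_prefix_iff httlt).2 hC, hset, ?_, ?_, hcond⟩
          · rcases hXc with ⟨hXA, hX'⟩ | ⟨hXm, hX'⟩
            · rw [hXA] at hOX
              have : ll = a' := hOX
              rw [hX', this]
              exact hOnx
            · rw [hX']
              obtain ⟨tX, hXeq, hXlt⟩ := inside_val (hrmem X hXm)
              rw [hXeq] at hOX ⊢
              exact (onLine_inl_prefix_iff hXlt).2 hOX
          · rcases hYc with ⟨hYB, hY'⟩ | ⟨hYm, hY'⟩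
            · rw [hYB] at hOY
              have : ll = b' := hOY
              rw [hY', this]
              exact hOnz
            · rw [hY']
              obtain ⟨tY, hYeq, hYlt⟩ := inside_val (hrmem Y hYm)
              rw [hYeq] at hOY ⊢
              exact (onLine_inl_prefix_iff hYlt).2 hOY
        have hgp : IsGPPath wd i q := by
          refine ⟨hchain_q, hrig_q, ⟨a', ?_, ha'le, ha'lo, ha'hi⟩,
            ⟨b', ?_, by omega, hb'lo, hb'hi⟩⟩
          · rw [hqdef]; rfl
          · rw [hqdef, ← List.cons_append]
            exact List.getLast?_concat
        have hint : pathInterior q = r := by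
          rw [hqdef]
          unfold pathInterior
          simp [List.dropLast_concat]
        have hsufnext : (z :: t₃) <:+ p0 := by
          have h1 : rest <:+ (y :: s'') := List.dropWhile_suffix _
          rw [hrest] at h1
          exact (h1.trans (List.suffix_cons x (y :: s''))).trans hsuf
        have hlennext : (z :: t₃).length ≤ m := by
          have h1 : (y :: s'').length = r.length + (z :: t₃).length := by
            rw [hyz]; simp
          have h2 : 1 ≤ r.length := List.length_pos_iff.2 hrne
          simp only [List.length_cons] at hle h1 ⊢
          omega
        obtain ⟨qs', hqs', heq'⟩ := ih (z :: t₃) hlennext hsufnext z t₃ rfl hFz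
        refine ⟨q :: qs', ?_, ?_⟩
        · intro q' hq'
          rcases List.mem_cons.1 hq' with rfl | hq'
          · exact hgp
          · exact hqs' q' hq'
        · rw [hyz, List.filter_append, List.filter_eq_self.2 hrmem]
          simp only [List.map_cons, List.flatten_cons, hint]
          rw [heq']

end GP
end Aux

/-- **Restrictions of GP-paths decompose into GP-paths.** The restriction to the `wd`-part
of any GP-path for the extended reduced expression `wd ++ ext` is either empty or a
(disjoint) union of GP-paths for `wd` of the same shape, traversed in order. -/
theorem restriction_is_union_of_GP_paths {n : ℕ} (wd ext : List (Fin n))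
    (hred : Reduced wd) (hred0 : Reduced (wd ++ ext))
    (hw0 : heightPerm (wd ++ ext) = Fin.revPerm)
    (i : Fin n) (p0 : List (V n)) (hp0 : IsGPPath (wd ++ ext) i p0) :
    resPath wd p0 = [] ∨
      ∃ qs : List (List (V n)), (∀ q ∈ qs, IsGPPath wd i q) ∧
        resPath wd p0 = (qs.map pathInterior).flatten := by
  have hcl : ∀ t (a b : Fin (n+1)), IsCross (wd ++ ext) t a b → a < b :=
    fun t a b h => cross_lt_of_reduced hred0 h
  obtain ⟨a, hh, hale, halo, hahi⟩ := hp0.source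
  obtain ⟨b, hlg, hbgt, hblo, hbhi⟩ := hp0.sink
  have haic : a = i.castSucc := by
    rw [hw0] at hahi
    simp only [Fin.revPerm_apply, Fin.le_def, Fin.val_rev, Fin.coe_castSucc] at hahi
    have h2 := a.isLt
    have h3 := i.isLt
    apply Fin.ext
    have hiv : (i.castSucc : Fin (n+1)).val = i.val := rfl
    rw [hiv]
    omega
  have hbis : b = i.succ := by
    rw [hw0] at hblo
    simp only [Fin.revPerm_apply, Fin.le_def, Fin.val_rev, Fin.val_succ] at hblo
    have h2 := b.isLt
    have h3 := i.isLt
    apply Fin.ext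
    have hiv : (i.succ : Fin (n+1)).val = i.val + 1 := rfl
    rw [hiv]
    omega
  have hhead : p0.head? = some (Sum.inr i.castSucc) := by rw [hh, haic]
  have hlast2 : p0.getLast? = some (Sum.inr i.succ) := by rw [hlg, hbis]
  obtain ⟨x0, tail, hp⟩ : ∃ x0 tail, p0 = x0 :: tail := by
    cases p0 with
    | nil => simp at hh
    | cons v t => exact ⟨v, t, rfl⟩
  have hx0 : x0 = Sum.inr i.castSucc := by
    rw [hp] at hhead
    simpa using hhead
  have hFx0 : Fpred wd x0 = false := by rw [hx0]; rfl
  obtain ⟨qs, hqs, heq⟩ := run_decomp hp0 hcl hhead hlast2 p0.length p0 le_rfl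
    (List.suffix_refl _) x0 tail hp hFx0
  exact Or.inr ⟨qs, hqs, heq⟩
end

section
/- For SL_4, w̲ = s_1 s_2 s_3 s_2 s_1 and its extension w̲_0 = s_1 s_2 s_3 s_2 s_1 s_2, the GHKK-type potential cone {x ∈ ℝ^8 : ^GHKK W^{trop}|_{X_s}(x) ≥ 0} is strictly contained in the restricted-superpotential cone Ξ_{w̲} = { x : res_{w̲}(W|_{X_{w̲_0}})^{trop}(x) ≥ 0 }; in particular the point x = (x_1,x_2,x_3,x_{12},x_{13},x_{14},x_{24},x_{34}) = (−1,−1,−1,−1,−1,−1,−1,1) lies in Ξ_{w̲} but not in the GHKK-type cone. -/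
/-- The restricted-superpotential cone `Ξ_{w̲}` for `SL₄`, `w̲ = s₁s₂s₃s₂s₁`, extension
`w̲₀ = s₁s₂s₃s₂s₁s₂` (coordinates `(x₁, x₂, x₃, x₁₂, x₁₃, x₁₄, x₂₄, x₃₄)` of `ℝ⁸`). -/
def XiRes : Set (Fin 8 → ℝ) :=
  {x | 0 ≤ -x 2 ∧
       0 ≤ -x 1 ∧ 0 ≤ -x 1 - x 4 ∧ 0 ≤ -x 1 - x 4 - x 7 ∧
       0 ≤ -x 0 ∧ 0 ≤ -x 0 - x 3 ∧
       0 ≤ -x 6 ∧ 0 ≤ -x 6 - x 7 ∧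
       0 ≤ -x 5 ∧ 0 ≤ -x 5 - x 4 ∧ 0 ≤ -x 5 - x 4 - x 7 ∧ 0 ≤ -x 5 - x 4 - x 7 - x 3}

/-- The GHKK-type potential cone for the same seed. -/
def GHKKCone : Set (Fin 8 → ℝ) :=
  {x | 0 ≤ -x 2 ∧
       0 ≤ -x 1 ∧ 0 ≤ -x 1 - x 4 ∧
       0 ≤ -x 0 ∧ 0 ≤ -x 0 - x 3 ∧
       0 ≤ -x 6 ∧
       0 ≤ -x 7 ∧ 0 ≤ -x 7 - x 3 ∧
       0 ≤ -x 5 ∧ 0 ≤ -x 5 - x 4}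

/-! Each inequality of `Ξ_{w̲}` missing from the GHKK-type system is the sum of two GHKK-type
inequalities, e.g. `-x₁₄ - x₁₃ - x₃₄ - x₁₂ = (-x₁₄ - x₁₃) + (-x₃₄ - x₁₂)`. The point
`(−1,…,−1,1)` violates `-x₃₄ ≥ 0`, which only the GHKK-type system imposes. -/

theorem ghkkCone_subset_xiRes : GHKKCone ⊆ XiRes := by
  rintro x ⟨h3, h2, h2_13, h1, h1_12, h24, h34, h34_12, h14, h14_13⟩
  exact ⟨h3, h2, h2_13, by linarith, h1, h1_12, h24, by linarith, h14, h14_13,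
    by linarith, by linarith⟩

theorem mem_xiRes_witness : ![(-1 : ℝ), -1, -1, -1, -1, -1, -1, 1] ∈ XiRes := by
  simp [XiRes]

theorem notMem_ghkkCone_witness : ![(-1 : ℝ), -1, -1, -1, -1, -1, -1, 1] ∉ GHKKCone := by
  simp [GHKKCone]

/-- **The GHKK-type cone is strictly contained in the restricted-superpotential cone.**
For `SL₄`, `w̲ = s₁s₂s₃s₂s₁` and its extension `w̲₀ = s₁s₂s₃s₂s₁s₂`, the cone cut out by
the tropicalized GHKK-type potential is strictly contained in `Ξ_{w̲}`; in particular the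
point `(x₁,…,x₃₄) = (−1,−1,−1,−1,−1,−1,−1,1)` lies in `Ξ_{w̲}` but not in the GHKK-type
cone. -/
theorem ghkk_ssubset_res :
    GHKKCone ⊂ XiRes ∧
    (![(-1 : ℝ), -1, -1, -1, -1, -1, -1, 1]) ∈ XiRes ∧
    (![(-1 : ℝ), -1, -1, -1, -1, -1, -1, 1]) ∉ GHKKCone :=
  ⟨(Set.ssubset_iff_of_subset ghkkCone_subset_xiRes).2
      ⟨_, mem_xiRes_witness, notMem_ghkkCone_witness⟩,
    mem_xiRes_witness, notMem_ghkkCone_witness⟩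
end

section
/- A mutable face of a pseudoline arrangement (a triangular face whose three vertices correspond to consecutive letters s_i s_{i+1} s_i or s_{i+1} s_i s_{i+1} in the reduced word) lies at level i before the braid move and at level i+1 after (respectively i+1 before and i after); consequently, under the braid-move mutation μ_X the weight areas transform by moving the face X from A_i to A_{i+1} (respectively from A_{i+1} to A_i) while all other faces keep their levels. -/
/-! A bounded face `t` lies in `A_l` exactly when the crossing `t` is at level `l` and the letter
`l` occurs again after position `t`. Away from the braid window the two words agree letter by
letter, and the windows `[a, b, a]` and `[b, a, b]` contain the same letters, so those faces are
unaffected. Inside the window, the face after the second crossing of `[a, b, a]` and the face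
after the third crossing of `[b, a, b]` are both at level `b` and, as `a ≠ b`, both ask for a `b`
in `v`; symmetrically for the other pair. -/

namespace Braid

variable {n : ℕ}

/-- Faces of the pseudoline arrangement of a word: `Sum.inl t` is the face bounded on the
left by the crossing at position `t` (whose level is the letter at `t`), `Sum.inr l` is
the face unbounded to the left at level `l`. -/
abbrev Face (n : ℕ) := ℕ ⊕ Fin n

/-- Membership in the weight area `A_l` of level `l`: the left-unbounded face at level `l`
together with all bounded faces at level `l` except the last one (i.e. those bounded faces
at level `l` that are followed by another crossing at level `l`). -/
def InWeightArea (wd : List (Fin n)) (l : Fin n) : Face n → Prop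
  | Sum.inr m => m = l
  | Sum.inl t => wd[t]? = some l ∧ ∃ t', t < t' ∧ wd[t']? = some l

/-- The re-identification of faces under a braid move at position `j`: the faces bounded
on the left by the second and third crossing of the braid exchange their indices, and all
other faces are unchanged. -/
def braidSwap (j : ℕ) : Face n → Face n
  | Sum.inl u => Sum.inl (if u = j + 1 then j + 2 else if u = j + 2 then j + 1 else u)
  | Sum.inr m => Sum.inr m

section Window

variable {α : Type*} {u m m' v : List α} {t : ℕ}

theorem getElem?_append_append_of_lt (ht : t < u.length) : (u ++ m ++ v)[t]? = u[t]? := by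
  rw [List.append_assoc, List.getElem?_append_left ht]

theorem getElem?_append_append_of_le (ht : u.length + m.length ≤ t) :
    (u ++ m ++ v)[t]? = v[t - (u.length + m.length)]? := by
  rw [List.getElem?_append_right (by simpa using ht), List.length_append]

theorem getElem?_append_append_congr (hm : m.length = m'.length)
    (ht : t < u.length ∨ u.length + m.length ≤ t) :
    (u ++ m ++ v)[t]? = (u ++ m' ++ v)[t]? := by
  rcases ht with ht | ht
  · rw [getElem?_append_append_of_lt ht, getElem?_append_append_of_lt ht]
  · rw [getElem?_append_append_of_le ht, getElem?_append_append_of_le (hm ▸ ht), hm]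

theorem mem_drop_append_append_iff (ht : t ≤ u.length) {x : α} :
    x ∈ (u ++ m ++ v).drop t ↔ x ∈ u.drop t ∨ x ∈ m ∨ x ∈ v := by
  rw [List.append_assoc, List.drop_append_of_le_length ht]
  simp only [List.mem_append]

theorem drop_append_append_of_le (ht : u.length + m.length ≤ t) :
    (u ++ m ++ v).drop t = v.drop (t - (u.length + m.length)) := by
  rw [List.drop_append, List.drop_eq_nil_of_le (by simpa using ht), List.nil_append,
    List.length_append]

end Window

theorem exists_lt_getElem?_eq_some_iff_mem_drop {α : Type*} (w : List α) (t : ℕ) (x : α) :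
    (∃ t', t < t' ∧ w[t']? = some x) ↔ x ∈ w.drop (t + 1) := by
  rw [List.mem_iff_getElem?]
  simp only [List.getElem?_drop]
  constructor
  · rintro ⟨t', htt', hx⟩
    exact ⟨t' - (t + 1), by rwa [Nat.add_sub_cancel' htt']⟩
  · rintro ⟨i, hx⟩
    exact ⟨t + 1 + i, by omega, hx⟩

theorem inWeightArea_inl_iff (w : List (Fin n)) (l : Fin n) (t : ℕ) :
    InWeightArea w l (Sum.inl t) ↔ w[t]? = some l ∧ l ∈ w.drop (t + 1) :=
  and_congr_right' (exists_lt_getElem?_eq_some_iff_mem_drop w t l)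

theorem inWeightArea_append_append_congr {u m m' v : List (Fin n)} {t : ℕ}
    (hm : m.length = m'.length) (hmem : ∀ x, x ∈ m ↔ x ∈ m')
    (ht : t < u.length ∨ u.length + m.length ≤ t) (l : Fin n) :
    InWeightArea (u ++ m ++ v) l (Sum.inl t) ↔ InWeightArea (u ++ m' ++ v) l (Sum.inl t) := by
  rw [inWeightArea_inl_iff, inWeightArea_inl_iff, getElem?_append_append_congr hm ht]
  refine and_congr_right' ?_
  rcases ht with ht | ht
  · rw [mem_drop_append_append_iff ht, mem_drop_append_append_iff ht, hmem]
  · rw [drop_append_append_of_le (by omega), drop_append_append_of_le (by omega), hm]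

section BraidWindow

variable (u v : List (Fin n)) {x y : Fin n} (l : Fin n)

theorem inWeightArea_braid_first :
    InWeightArea (u ++ [x, y, x] ++ v) l (Sum.inl u.length) ↔ x = l := by
  rw [inWeightArea_inl_iff]
  constructor
  · rintro ⟨hl, -⟩
    simpa using hl
  · rintro rfl
    simp [List.drop_append, List.drop_eq_nil_of_le]

theorem inWeightArea_braid_second (hxy : x ≠ y) :
    InWeightArea (u ++ [x, y, x] ++ v) l (Sum.inl (u.length + 1)) ↔
      InWeightArea (u ++ [y, x, y] ++ v) l (Sum.inl (u.length + 2)) := by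
  have hlevel : (u ++ [x, y, x] ++ v)[u.length + 1]? = some y := by simp
  have hlevel' : (u ++ [y, x, y] ++ v)[u.length + 2]? = some y := by simp
  have hafter : (u ++ [x, y, x] ++ v).drop (u.length + 1 + 1) = x :: v := by
    rw [List.append_assoc, Nat.add_assoc, List.drop_length_add_append]
    rfl
  have hafter' : (u ++ [y, x, y] ++ v).drop (u.length + 2 + 1) = v := by
    rw [List.append_assoc, Nat.add_assoc, List.drop_length_add_append]
    rfl
  rw [inWeightArea_inl_iff, inWeightArea_inl_iff, hlevel, hlevel', hafter, hafter']
  refine and_congr_right ?_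
  rintro ⟨⟩
  simp [hxy.symm]

end BraidWindow

section BraidSwap

variable {j t : ℕ}

theorem braidSwap_inl_add_one : braidSwap j (Sum.inl (j + 1) : Face n) = Sum.inl (j + 2) := by
  simp [braidSwap]

theorem braidSwap_inl_add_two : braidSwap j (Sum.inl (j + 2) : Face n) = Sum.inl (j + 1) := by
  simp [braidSwap]

theorem braidSwap_inl_of_ne (h1 : t ≠ j + 1) (h2 : t ≠ j + 2) :
    braidSwap j (Sum.inl t : Face n) = Sum.inl t := by
  simp [braidSwap, h1, h2]

end BraidSwap

theorem inWeightArea_braidSwap {u v : List (Fin n)} {a b : Fin n} (hab : a ≠ b) {f : Face n}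
    (hf : f ≠ Sum.inl u.length) (l : Fin n) :
    InWeightArea (u ++ [a, b, a] ++ v) l f ↔
      InWeightArea (u ++ [b, a, b] ++ v) l (braidSwap u.length f) := by
  rcases f with t | m
  · obtain rfl | h1 := eq_or_ne t (u.length + 1)
    · rw [braidSwap_inl_add_one]
      exact inWeightArea_braid_second u v l hab
    obtain rfl | h2 := eq_or_ne t (u.length + 2)
    · rw [braidSwap_inl_add_two]
      exact (inWeightArea_braid_second u v l hab.symm).symm
    have h0 : t ≠ u.length := fun h => hf (congrArg Sum.inl h)
    rw [braidSwap_inl_of_ne h1 h2]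
    refine inWeightArea_append_append_congr (by rfl) (fun x => ?_) ?_ l
    · simp only [List.mem_cons, List.not_mem_nil, or_false]
      tauto
    · simp only [List.length_cons, List.length_nil]
      omega
  · rfl

/-- **Levels and weight areas under a braid move.** For a braid move
`s_i s_{i±1} s_i ↦ s_{i±1} s_i s_{i±1}` at positions `j, j+1, j+2`, the mutable face `X`
(bounded on the left by the crossing at position `j`) lies at level `i` before and at
level `i±1` after the move, while all other faces keep their levels (under the face
re-identification `braidSwap`); consequently the weight areas transform by moving `X`
from `A_i` to `A_{i±1}`, all other memberships being preserved. -/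
theorem braid_move_weight_areas (u v : List (Fin n)) (a b : Fin n)
    (hab : b.val = a.val + 1 ∨ a.val = b.val + 1) :
    let wd := u ++ [a, b, a] ++ v
    let wd' := u ++ [b, a, b] ++ v
    let j := u.length
    -- the mutable face changes level from `a` to `b`
    (wd[j]? = some a ∧ wd'[j]? = some b) ∧
    -- all other faces keep their levels
    (wd[j+1]? = wd'[j+2]? ∧ wd[j+2]? = wd'[j+1]? ∧
      ∀ t : ℕ, t ≠ j → t ≠ j + 1 → t ≠ j + 2 → wd[t]? = wd'[t]?) ∧
    -- the face `X` moves from the weight area `A_a` to the weight area `A_b`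
    ((InWeightArea wd a (Sum.inl j) ↔ InWeightArea wd' b (Sum.inl j)) ∧
      ¬ InWeightArea wd b (Sum.inl j) ∧ ¬ InWeightArea wd' a (Sum.inl j)) ∧
    -- all other weight-area memberships are preserved
    (∀ f : Face n, f ≠ Sum.inl j → ∀ l : Fin n,
      (InWeightArea wd l f ↔ InWeightArea wd' l (braidSwap j f))) := by
  intro wd wd' j
  have hne : a ≠ b := by
    rintro rfl
    omega
  refine ⟨⟨by simp [wd, j], by simp [wd', j]⟩, ⟨by simp [wd, wd', j], by simp [wd, wd', j], ?_⟩,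
    ⟨?_, ?_, ?_⟩, fun f hf l => inWeightArea_braidSwap hne hf l⟩
  · intro t h0 h1 h2
    refine getElem?_append_append_congr rfl ?_
    simp only [List.length_cons, List.length_nil]
    omega
  · simp only [wd, wd', j, inWeightArea_braid_first]
  · simpa only [wd, j, inWeightArea_braid_first] using hne
  · simpa only [wd', j, inWeightArea_braid_first] using hne.symm

end Braid
end
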